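/- arXiv:2111.07953 — 9 statements merged into one kernel-verified Lean document; each statement's English description precedes it below -/
import Mathlib

section
/- Let H and I be linear cycle sets with I trivial, let 0 → I →^ι B →^π H → 0 be an extension of linear cycle sets, and let s and s' be set-theoretic sections of π with s(0) = s'(0) = 0. Then for all h ∈ H and y ∈ I one has s(h)·ι(y) = s'(h)·ι(y) and ι(y)·s(h) − s(h) = ι(y)·s'(h) − s'(h); that is, the maps ♦ and ≪ induced by a section are independent of the chosen section. -/
open scoped Classical

/-- A linear cycle set structure on an additive abelian group. -/
structure LCS (A : Type*) [AddCommGroup A] where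
  dot : A → A → A
  bij : ∀ a, Function.Bijective (dot a)
  dot_add : ∀ a b c, dot a (b + c) = dot a b + dot a c
  add_dot : ∀ a b c, dot (a + b) c = dot (dot a b) (dot a c)

/-- If `I` is a trivial linear cycle set and `0 → I → B → H → 0` is an extension of
linear cycle sets, then for any two set-theoretic sections `s, s'` of `π` with
`s 0 = s' 0 = 0` one has `s h · ι y = s' h · ι y` and
`ι y · s h - s h = ι y · s' h - s' h`; that is, the maps `♦` and `≪` do not depend
on the chosen section. -/
theorem statement1 {I B H : Type*} [AddCommGroup I] [AddCommGroup B] [AddCommGroup H]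
    (cI : LCS I) (cB : LCS B) (cH : LCS H)
    (htrivI : ∀ x y, cI.dot x y = y)
    (ι : I →+ B) (π : B →+ H)
    (hιdot : ∀ x y, ι (cI.dot x y) = cB.dot (ι x) (ι y))
    (hπdot : ∀ a b, π (cB.dot a b) = cH.dot (π a) (π b))
    (hinj : Function.Injective ι) (hsurj : Function.Surjective π)
    (hexact : ∀ b, π b = 0 ↔ b ∈ Set.range ι)
    (s s' : H → B) (hsec : ∀ h, π (s h) = h) (hsec' : ∀ h, π (s' h) = h)
    (hs0 : s 0 = 0) (hs0' : s' 0 = 0) :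
    ∀ (h : H) (y : I),
      cB.dot (s h) (ι y) = cB.dot (s' h) (ι y) ∧
      cB.dot (ι y) (s h) - s h = cB.dot (ι y) (s' h) - s' h := by
  intro h y
  -- dot a 0 = 0 in H
  have hdot0 : ∀ a : H, cH.dot a 0 = 0 := by
    intro a
    have h1 : cH.dot a 0 + cH.dot a 0 = cH.dot a 0 + 0 := by
      rw [add_zero, ← cH.dot_add, add_zero]
    exact (add_left_cancel h1)
  have hπι : ∀ u : I, π (ι u) = 0 := fun u => (hexact (ι u)).2 ⟨u, rfl⟩
  have hιι : ∀ u v : I, cB.dot (ι u) (ι v) = ι v := by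
    intro u v; rw [← hιdot, htrivI]
  obtain ⟨x, hx⟩ := (hexact (s h - s' h)).1 (by simp [hsec, hsec'])
  have hsh : s h = s' h + ι x := by rw [hx]; abel
  constructor
  · rw [hsh, cB.add_dot]
    obtain ⟨u, hu⟩ := (hexact (cB.dot (s' h) (ι x))).1 (by rw [hπdot, hπι, hdot0])
    obtain ⟨v, hv⟩ := (hexact (cB.dot (s' h) (ι y))).1 (by rw [hπdot, hπι, hdot0])
    rw [← hu, ← hv, hιι, hv]
  · rw [hsh, cB.dot_add, hιι]; abel
end

section
/- In the structure I×_{β,f}^{♦,≪}H (where f : H×H → I is an arbitrary map, not assumed normalized), the equalities ι(y)·w_h = ι(y≪h) + w_h and w_h·ι(y) = ι(h♦y) hold for all h ∈ H and y ∈ I if and only if f(h,0) = f(0,h) = 0 for all h ∈ H. -/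
open scoped Classical

/-- The sum of the extension `I ×_β H`. -/
def addP {I H : Type*} [AddCommGroup I] [AddCommGroup H] (β : H → H → I)
    (p q : I × H) : I × H :=
  (p.1 + q.1 + β p.2 q.2, p.2 + q.2)

/-- The cycle operation of `I ×_{β,f}^{♦,≪} H`. -/
def dotP {I H : Type*} [AddCommGroup I] [AddCommGroup H] (cI : LCS I) (cH : LCS H)
    (d : H → I → I) (yl : I → H → I) (f : H → H → I) (p q : I × H) : I × H :=
  (cI.dot (d p.2 p.1) (d p.2 q.1) + cI.dot (d p.2 p.1) (f p.2 q.2)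
      + yl (d p.2 p.1) (cH.dot p.2 q.2),
    cH.dot p.2 q.2)


lemma LCS.dot_zero {A : Type*} [AddCommGroup A] (c : LCS A) (a : A) :
    c.dot a 0 = 0 := by
  have := c.dot_add a 0 0
  rw [add_zero] at this
  exact add_eq_right.mp this.symm

lemma LCS.zero_dot {A : Type*} [AddCommGroup A] (c : LCS A) (a : A) :
    c.dot 0 a = a := by
  have h := c.add_dot 0 0 a
  rw [add_zero, c.dot_zero] at h
  exact ((c.bij 0).1 h.symm)

/-- In `I ×_{β,f}^{♦,≪} H` (with `f` arbitrary), the equalities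
`ι y · w_h = ι (y ≪ h) + w_h` and `w_h · ι y = ι (h ♦ y)` hold for all `h, y`
if and only if `f (h, 0) = f (0, h) = 0` for all `h`. -/
theorem statement2 {I H : Type*} [AddCommGroup I] [AddCommGroup H]
    (cI : LCS I) (cH : LCS H) (β : H → H → I)
    (hβ1 : ∀ h h' h'', β h h' + β (h + h') h'' = β h' h'' + β h (h' + h''))
    (hβ2 : ∀ h, β h 0 = 0 ∧ β 0 h = 0)
    (hβ3 : ∀ h h', β h h' = β h' h)
    (d : H → I → I) (yl : I → H → I) (f : H → H → I)
    (hd1 : ∀ h y y', d h (y + y') = d h y + d h y')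
    (hd2 : ∀ y, d 0 y = y)
    (hyl1 : ∀ h, yl 0 h = 0)
    (hyl2 : ∀ y, yl y 0 = 0) :
    (∀ (h : H) (y : I),
        dotP cI cH d yl f (y, 0) ((0 : I), h) = addP β (yl y h, (0 : H)) ((0 : I), h) ∧
        dotP cI cH d yl f ((0 : I), h) (y, 0) = (d h y, (0 : H))) ↔
      (∀ h, f h 0 = 0 ∧ f 0 h = 0) := by
  have hd0 : ∀ h : H, d h 0 = 0 := by
    intro h
    have := hd1 h 0 0
    rw [add_zero] at this
    exact add_eq_right.mp this.symm
  constructor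
  · intro hmain h
    constructor
    · have h2 := (hmain h 0).2
      simp only [dotP, hd0, cH.dot_zero, cI.zero_dot, hyl1, Prod.mk.injEq] at h2
      simpa using h2.1
    · have h1 := (hmain h 0).1
      simp only [dotP, addP, hd2, cI.dot_zero, cH.zero_dot, cI.zero_dot, hyl1,
        (hβ2 h).2, Prod.mk.injEq, zero_add, add_zero] at h1
      simpa using h1.1
  · intro hf h y
    constructor
    · simp only [dotP, addP, hd2, cI.dot_zero, cH.zero_dot, (hf h).2, (hβ2 h).2,
        Prod.mk.injEq, zero_add, add_zero]
    · simp only [dotP, hd0, cH.dot_zero, cI.zero_dot, hyl1, (hf h).1,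
        Prod.mk.injEq, add_zero]
end

section
/- In the structure I×_{β,f}^{♦,≪}H, the left translations z ↦ (y,h)·z on I×H are bijective for all (y,h) ∈ I×H if and only if the maps y' ↦ h♦y' are bijective for all h ∈ H. -/
open scoped Classical

/-- In `I ×_{β,f}^{♦,≪} H`, all left translations `z ↦ (y,h) · z` are bijective
if and only if all maps `y' ↦ h ♦ y'` are bijective. -/
theorem statement3 {I H : Type*} [AddCommGroup I] [AddCommGroup H]
    (cI : LCS I) (cH : LCS H) (β : H → H → I)
    (hβ1 : ∀ h h' h'', β h h' + β (h + h') h'' = β h' h'' + β h (h' + h''))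
    (hβ2 : ∀ h, β h 0 = 0 ∧ β 0 h = 0)
    (hβ3 : ∀ h h', β h h' = β h' h)
    (d : H → I → I) (yl : I → H → I) (f : H → H → I)
    (hd1 : ∀ h y y', d h (y + y') = d h y + d h y')
    (hd2 : ∀ y, d 0 y = y)
    (hyl1 : ∀ h, yl 0 h = 0)
    (hyl2 : ∀ y, yl y 0 = 0)
    (hf : ∀ h, f h 0 = 0 ∧ f 0 h = 0) :
    (∀ p : I × H, Function.Bijective (dotP cI cH d yl f p)) ↔
      (∀ h : H, Function.Bijective (d h)) := by
  constructor
  · intro hp h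
    have hd0 : d h 0 = 0 := by
      have h1 := hd1 h 0 0
      simp only [add_zero] at h1
      exact (left_eq_add.mp h1)
    have cdot0 : ∀ a : I, cI.dot a 0 = 0 := by
      intro a
      have h1 := cI.dot_add a 0 0
      simp only [add_zero] at h1
      exact (left_eq_add.mp h1)
    have spec := hp (0, h)
    constructor
    · intro a b hab
      have key : dotP cI cH d yl f (0, h) (a, 0) = dotP cI cH d yl f (0, h) (b, 0) := by
        unfold dotP
        simp [hd0, hab]
      have := spec.1 key
      exact congrArg Prod.fst this
    · intro y
      obtain ⟨q, hq⟩ := spec.2 (cI.dot 0 y, cH.dot h 0)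
      unfold dotP at hq
      have h2 : cH.dot h q.2 = cH.dot h 0 := congrArg Prod.snd hq
      have e2 : q.2 = 0 := (cH.bij h).1 h2
      have h1 : cI.dot (d h 0) (d h q.1) + cI.dot (d h 0) (f h q.2)
          + yl (d h 0) (cH.dot h q.2) = cI.dot 0 y := congrArg Prod.fst hq
      rw [e2, hd0, (hf h).1, cdot0, hyl1, add_zero, add_zero] at h1
      exact ⟨q.1, (cI.bij 0).1 h1⟩
  · intro hd ⟨y, h⟩
    constructor
    · intro q q' hqq
      have e2 : q.2 = q'.2 := (cH.bij h).1 (congrArg Prod.snd hqq)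
      have h1 : cI.dot (d h y) (d h q.1) + cI.dot (d h y) (f h q.2)
          + yl (d h y) (cH.dot h q.2)
          = cI.dot (d h y) (d h q'.1) + cI.dot (d h y) (f h q'.2)
          + yl (d h y) (cH.dot h q'.2) := congrArg Prod.fst hqq
      rw [e2] at h1
      have h3 := add_right_cancel (add_right_cancel h1)
      have e1 : q.1 = q'.1 := (hd h).1 ((cI.bij (d h y)).1 h3)
      exact Prod.ext e1 e2
    · intro z
      obtain ⟨w2, hw2⟩ := (cH.bij h).2 z.2
      obtain ⟨u, hu⟩ := (cI.bij (d h y)).2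
        (z.1 - cI.dot (d h y) (f h w2) - yl (d h y) z.2)
      obtain ⟨w1, hw1⟩ := (hd h).2 u
      refine ⟨(w1, w2), Prod.ext ?_ hw2⟩
      show cI.dot (d h y) (d h w1) + cI.dot (d h y) (f h w2)
          + yl (d h y) (cH.dot h w2) = z.1
      rw [hw1, hu, hw2]
      abel
end

section
/- Assume the operation · of I×_{β,f}^{♦,≪}H satisfies a·(b+c) = a·b + a·c for all a,b,c ∈ I×H. Then · satisfies (a+b)·c = (a·b)·(a·c) for all a,b,c ∈ I×H if and only if, for all y,y' ∈ I and h,h',h'' ∈ H: (i) ((h+h')♦(y+y'+β(h,h'))) · ((h+h')♦y'') = ((h·h')♦Y(y,y',h,h')) · ((h·h')♦((h♦y)·(h♦y''))), and (ii) ((h+h')♦(y+y'+β(h,h')))·f(h+h',h'') + ((h+h')♦(y+y'+β(h,h')))≪((h+h')·h'') = ((h·h')♦Y(y,y',h,h'))·((h·h')♦Y(y,0,h,h'') + f(h·h', h·h'')) + ((h·h')♦Y(y,y',h,h'))≪((h·h')·(h·h'')), where Y(y,y',h,h') := (h♦y)·(h♦y') + (h♦y)·f(h,h') + (h♦y)≪(h·h').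 -/
open scoped Classical

/-- The auxiliary element `Y(y,y',h,h')`. -/
def Yf {I H : Type*} [AddCommGroup I] [AddCommGroup H] (cI : LCS I) (cH : LCS H)
    (d : H → I → I) (yl : I → H → I) (f : H → H → I) (y y' : I) (h h' : H) : I :=
  cI.dot (d h y) (d h y') + cI.dot (d h y) (f h h') + yl (d h y) (cH.dot h h')

/-- Assuming left distributivity, the operation `·` of `I ×_{β,f}^{♦,≪} H`
satisfies `(a+b)·c = (a·b)·(a·c)` if and only if conditions (i) and (ii) hold. -/
theorem statement5 {I H : Type*} [AddCommGroup I] [AddCommGroup H]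
    (cI : LCS I) (cH : LCS H) (β : H → H → I)
    (hβ1 : ∀ h h' h'', β h h' + β (h + h') h'' = β h' h'' + β h (h' + h''))
    (hβ2 : ∀ h, β h 0 = 0 ∧ β 0 h = 0)
    (hβ3 : ∀ h h', β h h' = β h' h)
    (d : H → I → I) (yl : I → H → I) (f : H → H → I)
    (hd1 : ∀ h y y', d h (y + y') = d h y + d h y')
    (hd2 : ∀ y, d 0 y = y)
    (hyl1 : ∀ h, yl 0 h = 0)
    (hyl2 : ∀ y, yl y 0 = 0)
    (hf : ∀ h, f h 0 = 0 ∧ f 0 h = 0)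
    (hdist : ∀ a b c : I × H,
      dotP cI cH d yl f a (addP β b c) =
        addP β (dotP cI cH d yl f a b) (dotP cI cH d yl f a c)) :
    (∀ a b c : I × H,
        dotP cI cH d yl f (addP β a b) c =
          dotP cI cH d yl f (dotP cI cH d yl f a b) (dotP cI cH d yl f a c)) ↔
      ((∀ (y y' y'' : I) (h h' : H),
          cI.dot (d (h + h') (y + y' + β h h')) (d (h + h') y'') =
            cI.dot (d (cH.dot h h') (Yf cI cH d yl f y y' h h'))
              (d (cH.dot h h') (cI.dot (d h y) (d h y'')))) ∧
       (∀ (y y' : I) (h h' h'' : H),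
          cI.dot (d (h + h') (y + y' + β h h')) (f (h + h') h'') +
              yl (d (h + h') (y + y' + β h h')) (cH.dot (h + h') h'') =
            cI.dot (d (cH.dot h h') (Yf cI cH d yl f y y' h h'))
                (d (cH.dot h h') (Yf cI cH d yl f y 0 h h'') +
                  f (cH.dot h h') (cH.dot h h'')) +
              yl (d (cH.dot h h') (Yf cI cH d yl f y y' h h'))
                (cH.dot (cH.dot h h') (cH.dot h h'')))) := by

  have dotz : ∀ a : I, cI.dot a 0 = 0 := fun a => by
    have h := cI.dot_add a 0 0
    rw [add_zero] at h
    exact (left_eq_add.mp h)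
  have dotzH : ∀ a : H, cH.dot a 0 = 0 := fun a => by
    have h := cH.dot_add a 0 0
    rw [add_zero] at h
    exact (left_eq_add.mp h)
  have dz : ∀ h : H, d h 0 = 0 := fun h => by
    have h1 := hd1 h 0 0
    rw [add_zero] at h1
    exact (left_eq_add.mp h1)
  constructor
  · intro hall
    constructor
    · intro y y' y'' h h'
      have E := congrArg Prod.fst (hall (y, h) (y', h') (y'', 0))
      simp only [dotP, addP, Yf] at E ⊢
      simp only [dz, dotz, dotzH, add_zero, zero_add, hd1, cI.dot_add,
        (hf _).1, hyl2] at E ⊢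
      abel_nf at E ⊢
      exact E
    · intro y y' h h' h''
      have E := congrArg Prod.fst (hall (y, h) (y', h') (0, h''))
      simp only [dotP, addP, Yf] at E ⊢
      simp only [dz, dotz, add_zero, zero_add, hd1, cI.dot_add] at E ⊢
      abel_nf at E ⊢
      exact E
  · rintro ⟨hi, hii⟩ ⟨y, h⟩ ⟨y', h'⟩ ⟨y'', h''⟩
    have E1 := hi y y' y'' h h'
    have E2 := hii y y' h h' h''
    have E3 := congrArg₂ (· + ·) E1 E2
    simp only [dotP, addP, Prod.mk.injEq]
    refine ⟨?_, cH.add_dot h h' h''⟩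
    simp only [Yf] at E3 ⊢
    simp only [dz, dotz, add_zero, zero_add, hd1, cI.dot_add] at E3 ⊢
    abel_nf at E3 ⊢
    exact E3
end

section
/- Suppose I×_{β,f}^{♦,≪}H and I×_{β',f'}^{♦',≪'}H are both linear cycle sets giving extensions of H by I, and that φ : H → I satisfies φ(0) = 0, φ(h) − φ(h+h') + φ(h') = β(h,h') − β'(h,h'), h♦φ(h) ∈ Soc(I), φ(h) = y·φ(h) for all y ∈ I, and φ(h·h') = h♦φ(h') + (h♦φ(h))≪(h·h'), so that (y,h) ↦ (y+φ(h),h) is an equivalence of extensions from I×_{β,f}^{♦,≪}H to I×_{β',f'}^{♦',≪'}H. Then ≪ = ≪' and ♦ = ♦'. -/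
open scoped Classical

/-- If `(y,h) ↦ (y + φ h, h)` is an equivalence of extensions from
`I ×_{β,f}^{♦,≪} H` to `I ×_{β',f'}^{♦',≪'} H` (with `φ` as in the
equivalence criterion), then `≪ = ≪'` and `♦ = ♦'`. -/
theorem statement8 {I H : Type*} [AddCommGroup I] [AddCommGroup H]
    (cI : LCS I) (cH : LCS H) (β β' : H → H → I)
    (hβ1 : ∀ h h' h'', β h h' + β (h + h') h'' = β h' h'' + β h (h' + h''))
    (hβ2 : ∀ h, β h 0 = 0 ∧ β 0 h = 0)
    (hβ3 : ∀ h h', β h h' = β h' h)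
    (hβ'1 : ∀ h h' h'', β' h h' + β' (h + h') h'' = β' h' h'' + β' h (h' + h''))
    (hβ'2 : ∀ h, β' h 0 = 0 ∧ β' 0 h = 0)
    (hβ'3 : ∀ h h', β' h h' = β' h' h)
    (d d' : H → I → I) (yl yl' : I → H → I) (f f' : H → H → I)
    (hd1 : ∀ h y y', d h (y + y') = d h y + d h y') (hd2 : ∀ y, d 0 y = y)
    (hyl1 : ∀ h, yl 0 h = 0) (hyl2 : ∀ y, yl y 0 = 0)
    (hf : ∀ h, f h 0 = 0 ∧ f 0 h = 0)
    (hd'1 : ∀ h y y', d' h (y + y') = d' h y + d' h y') (hd'2 : ∀ y, d' 0 y = y)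
    (hyl'1 : ∀ h, yl' 0 h = 0) (hyl'2 : ∀ y, yl' y 0 = 0)
    (hf' : ∀ h, f' h 0 = 0 ∧ f' 0 h = 0)
    -- both structures are linear cycle sets:
    (hlcs : (∀ p : I × H, Function.Bijective (dotP cI cH d yl f p)) ∧
      (∀ a b c : I × H,
        dotP cI cH d yl f a (addP β b c) =
          addP β (dotP cI cH d yl f a b) (dotP cI cH d yl f a c)) ∧
      (∀ a b c : I × H,
        dotP cI cH d yl f (addP β a b) c =
          dotP cI cH d yl f (dotP cI cH d yl f a b) (dotP cI cH d yl f a c)))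
    (hlcs' : (∀ p : I × H, Function.Bijective (dotP cI cH d' yl' f' p)) ∧
      (∀ a b c : I × H,
        dotP cI cH d' yl' f' a (addP β' b c) =
          addP β' (dotP cI cH d' yl' f' a b) (dotP cI cH d' yl' f' a c)) ∧
      (∀ a b c : I × H,
        dotP cI cH d' yl' f' (addP β' a b) c =
          dotP cI cH d' yl' f' (dotP cI cH d' yl' f' a b)
            (dotP cI cH d' yl' f' a c)))
    (φ : H → I)
    (hφ0 : φ 0 = 0)
    (hφβ : ∀ h h', φ h - φ (h + h') + φ h' = β h h' - β' h h')
    (hφsoc : ∀ (h : H) (a : I), cI.dot (d h (φ h)) a = a)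
    (hφdot : ∀ (y : I) (h : H), φ h = cI.dot y (φ h))
    (hφmul : ∀ h h', φ (cH.dot h h') = d h (φ h') + yl (d h (φ h)) (cH.dot h h'))
    -- `(y,h) ↦ (y + φ h, h)` is an equivalence of extensions:
    (hΦadd : ∀ p q : I × H,
      ((addP β p q).1 + φ (addP β p q).2, (addP β p q).2) =
        addP β' (p.1 + φ p.2, p.2) (q.1 + φ q.2, q.2))
    (hΦdot : ∀ p q : I × H,
      ((dotP cI cH d yl f p q).1 + φ (dotP cI cH d yl f p q).2,
          (dotP cI cH d yl f p q).2) =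
        dotP cI cH d' yl' f' (p.1 + φ p.2, p.2) (q.1 + φ q.2, q.2)) :
    yl = yl' ∧ d = d' := by
  -- basic lemmas
  have cIa0 : ∀ a : I, cI.dot a 0 = 0 := by
    intro a
    have h := cI.dot_add a 0 0
    rw [add_zero] at h
    exact (left_eq_add.mp h)
  have cHa0 : ∀ a : H, cH.dot a 0 = 0 := by
    intro a
    have h := cH.dot_add a 0 0
    rw [add_zero] at h
    exact (left_eq_add.mp h)
  have cI0 : ∀ a : I, cI.dot 0 a = a := by
    intro a
    have h := cI.add_dot 0 0 a
    rw [zero_add, cIa0 0] at h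
    exact ((cI.bij 0).1 h).symm
  have cH0 : ∀ a : H, cH.dot 0 a = a := by
    intro a
    have h := cH.add_dot 0 0 a
    rw [zero_add, cHa0 0] at h
    exact ((cH.bij 0).1 h).symm
  have dzero : ∀ h : H, d h 0 = 0 := by
    intro h
    have := hd1 h 0 0
    rw [add_zero] at this
    exact (left_eq_add.mp this)
  have d'zero : ∀ h : H, d' h 0 = 0 := by
    intro h
    have := hd'1 h 0 0
    rw [add_zero] at this
    exact (left_eq_add.mp this)
  have dneg : ∀ (h : H) (y : I), d h (-y) = -(d h y) := by
    intro h y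
    have := hd1 h y (-y)
    rw [add_neg_cancel, dzero h] at this
    exact (neg_eq_of_add_eq_zero_right this.symm).symm
  -- the negative of a socle element also acts trivially
  have socneg : ∀ (h : H) (a : I), cI.dot (-(d h (φ h))) a = a := by
    intro h a
    have key := cI.add_dot (d h (φ h)) (-(d h (φ h))) a
    rw [add_neg_cancel, cI0, hφsoc, hφsoc] at key
    exact key.symm
  -- d = d'
  have hd : d = d' := by
    funext h y'
    have E := congrArg Prod.fst (hΦdot (-(φ h), h) (y', 0))
    simp only [dotP, addP] at E
    rw [(hf h).1, cIa0, cHa0, hyl2, hφ0, add_zero, add_zero, add_zero,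
      neg_add_cancel, d'zero, cI0, (hf' h).1, cIa0, hyl'1, add_zero, add_zero,
      dneg, socneg, add_zero] at E
    exact E
  -- yl = yl'
  have hyl : yl = yl' := by
    funext y h'
    have E := congrArg Prod.fst (hΦdot (y, 0) (0, h'))
    simp only [dotP, addP] at E
    rw [hd2, dzero, cIa0, (hf h').2, cIa0, cH0, zero_add, zero_add, hφ0,
      add_zero, zero_add, hd'2, hd'2, (hf' h').2, cIa0, add_zero,
      ← hφdot y h', add_comm (φ h') (yl' y h')] at E
    exact add_right_cancel E
  exact ⟨hyl, hd⟩
end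

section
/- Assume that h♦(y≪h'), h♦β(h',h'') and h♦f(h',h'') belong to Z(I) for all h,h',h'' ∈ H and y ∈ I, and that the operation · of I×_{β,f}^{♦,≪}H satisfies a·(b+c) = a·b + a·c for all a,b,c ∈ I×H. Then the condition ((h+h')♦(y+y'+β(h,h'))) · ((h+h')♦y'') = ((h·h')♦Y(y,y',h,h')) · ((h·h')♦((h♦y)·(h♦y''))) holds for all h,h' ∈ H and y,y',y'' ∈ I (where Y(y,y',h,h') := (h♦y)·(h♦y') + (h♦y)·f(h,h') + (h♦y)≪(h·h')) if and only if (h♦y)·(h♦y') = h♦(y·y') and (h+h')♦y = (h·h')♦(h♦y) for all h,h' ∈ H and y,y' ∈ I. -/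
open scoped Classical

/-- Under the centrality hypotheses and left distributivity, condition
(3.6) holds if and only if `(h♦y)·(h♦y') = h♦(y·y')` and
`(h+h')♦y = (h·h')♦(h♦y)`. -/
theorem statement9 {I H : Type*} [AddCommGroup I] [AddCommGroup H]
    (cI : LCS I) (cH : LCS H) (β : H → H → I)
    (hβ1 : ∀ h h' h'', β h h' + β (h + h') h'' = β h' h'' + β h (h' + h''))
    (hβ2 : ∀ h, β h 0 = 0 ∧ β 0 h = 0)
    (hβ3 : ∀ h h', β h h' = β h' h)
    (d : H → I → I) (yl : I → H → I) (f : H → H → I)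
    (hd1 : ∀ h y y', d h (y + y') = d h y + d h y')
    (hd2 : ∀ y, d 0 y = y)
    (hyl1 : ∀ h, yl 0 h = 0)
    (hyl2 : ∀ y, yl y 0 = 0)
    (hf : ∀ h, f h 0 = 0 ∧ f 0 h = 0)
    -- centrality hypotheses:
    (hc1 : ∀ (h h' : H) (y : I) (a : I),
      cI.dot (d h (yl y h')) a = a ∧ cI.dot a (d h (yl y h')) = d h (yl y h'))
    (hc2 : ∀ (h h' h'' : H) (a : I),
      cI.dot (d h (β h' h'')) a = a ∧ cI.dot a (d h (β h' h'')) = d h (β h' h''))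
    (hc3 : ∀ (h h' h'' : H) (a : I),
      cI.dot (d h (f h' h'')) a = a ∧ cI.dot a (d h (f h' h'')) = d h (f h' h''))
    -- left distributivity of `·` on `I ×_{β,f}^{♦,≪} H`:
    (hdist : ∀ a b c : I × H,
      dotP cI cH d yl f a (addP β b c) =
        addP β (dotP cI cH d yl f a b) (dotP cI cH d yl f a c)) :
    (∀ (y y' y'' : I) (h h' : H),
        cI.dot (d (h + h') (y + y' + β h h')) (d (h + h') y'') =
          cI.dot (d (cH.dot h h') (Yf cI cH d yl f y y' h h'))
            (d (cH.dot h h') (cI.dot (d h y) (d h y'')))) ↔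
      ((∀ (h : H) (y y' : I), cI.dot (d h y) (d h y') = d h (cI.dot y y')) ∧
       (∀ (h h' : H) (y : I), d (h + h') y = d (cH.dot h h') (d h y))) := by
  -- basic consequences of the axioms
  have dotI_zero : ∀ a : I, cI.dot a 0 = 0 := by
    intro a
    have h := cI.dot_add a 0 0
    rw [add_zero] at h
    exact (left_eq_add.mp h)
  have zero_dotI : ∀ a : I, cI.dot 0 a = a := by
    intro a
    have h := cI.add_dot 0 0 a
    rw [add_zero, dotI_zero 0] at h
    exact ((cI.bij 0).1 h).symm
  have d_zero : ∀ h : H, d h 0 = 0 := by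
    intro h
    have := hd1 h 0 0
    rw [add_zero] at this
    exact (left_eq_add.mp this)
  -- centrality
  have cent_f : ∀ h h' : H, (∀ a, cI.dot (f h h') a = a) ∧ (∀ a, cI.dot a (f h h') = f h h') := by
    intro h h'
    constructor
    · intro a; have := (hc3 0 h h' a).1; rwa [hd2] at this
    · intro a; have := (hc3 0 h h' a).2; rwa [hd2] at this
  have cent_yl : ∀ (y : I) (h : H),
      (∀ a, cI.dot (yl y h) a = a) ∧ (∀ a, cI.dot a (yl y h) = yl y h) := by
    intro y h
    constructor
    · intro a; have := (hc1 0 h y a).1; rwa [hd2] at this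
    · intro a; have := (hc1 0 h y a).2; rwa [hd2] at this
  -- adding a central element on the left argument does not change the dot
  have key : ∀ z : I, (∀ a, cI.dot z a = a) → (∀ a, cI.dot a z = z) →
      ∀ a c : I, cI.dot (a + z) c = cI.dot a c := by
    intro z hz1 hz2 a c
    rw [cI.add_dot, hz2, hz1]
  have cent_add : ∀ z w : I, (∀ a, cI.dot z a = a) → (∀ a, cI.dot a z = z) →
      (∀ a, cI.dot w a = a) → (∀ a, cI.dot a w = w) →
      (∀ a, cI.dot (z + w) a = a) ∧ (∀ a, cI.dot a (z + w) = z + w) := by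
    intro z w hz1 hz2 hw1 hw2
    constructor
    · intro a; rw [cI.add_dot, hz1, hz1, hw1]
    · intro a; rw [cI.dot_add, hz2, hw2]
  constructor
  · -- forward direction
    intro h36
    constructor
    · -- (A)
      intro h y y'
      have e := h36 y 0 y' 0 h
      rw [zero_add, (hβ2 h).2, add_zero, add_zero] at e
      have hH0 : cH.dot 0 h = h := by
        have h1 : cH.dot 0 0 = 0 := by
          have := cH.dot_add 0 0 0
          rw [add_zero] at this
          exact (left_eq_add.mp this)
        have h2 := cH.add_dot 0 0 h
        rw [add_zero, h1] at h2
        exact ((cH.bij 0).1 h2).symm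
      rw [hH0] at e
      have hY : Yf cI cH d yl f y 0 0 h = yl y h := by
        unfold Yf
        simp [hd2, dotI_zero, (hf h).2, hH0]
      rw [hY, hd2, hd2, (hc1 h h y _).1] at e
      exact e
    · -- (B)
      intro h h' y
      have e := h36 0 0 y h h'
      rw [add_zero, zero_add] at e
      have hY : Yf cI cH d yl f 0 0 h h' = f h h' := by
        unfold Yf
        simp [d_zero, zero_dotI, hyl1]
      rw [hY, d_zero, zero_dotI, (hc3 (cH.dot h h') h h' _).1,
        (hc2 (h + h') h h' _).1] at e
      exact e
  · -- backward direction
    rintro ⟨hA, hB⟩ y y' y'' h h'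
    have lhs_eq : cI.dot (d h (y + y' + β h h')) (d h y'')
        = cI.dot (cI.dot (d h y) (d h y')) (cI.dot (d h y) (d h y'')) := by
      rw [hd1, hd1, key (d h (β h h')) (fun a => (hc2 h h h' a).1)
        (fun a => (hc2 h h h' a).2), cI.add_dot]
    have rhs_eq : cI.dot (Yf cI cH d yl f y y' h h') (cI.dot (d h y) (d h y''))
        = cI.dot (cI.dot (d h y) (d h y')) (cI.dot (d h y) (d h y'')) := by
      unfold Yf
      rw [(cent_f h h').2 (d h y), add_assoc]
      obtain ⟨hz1, hz2⟩ := cent_add (f h h') (yl (d h y) (cH.dot h h'))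
        (cent_f h h').1 (cent_f h h').2 (cent_yl (d h y) (cH.dot h h')).1
        (cent_yl (d h y) (cH.dot h h')).2
      rw [key _ hz1 hz2]
    calc cI.dot (d (h + h') (y + y' + β h h')) (d (h + h') y'')
        = cI.dot (d (cH.dot h h') (d h (y + y' + β h h')))
            (d (cH.dot h h') (d h y'')) := by rw [hB, hB]
      _ = d (cH.dot h h') (cI.dot (d h (y + y' + β h h')) (d h y'')) := hA _ _ _
      _ = d (cH.dot h h') (cI.dot (Yf cI cH d yl f y y' h h')
            (cI.dot (d h y) (d h y''))) := by rw [lhs_eq, rhs_eq]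
      _ = cI.dot (d (cH.dot h h') (Yf cI cH d yl f y y' h h'))
            (d (cH.dot h h') (cI.dot (d h y) (d h y''))) := (hA _ _ _).symm
end

section
/- The diagram (Ĉ_N^{**}(H,I), ∂_h^{**}, ∂_v^{**}) is a double cochain complex; that is, ∂_h^{r+1,s} ∘ ∂_h^{r,s} = 0, ∂_v^{r,s+1} ∘ ∂_v^{r,s} = 0, and ∂_v^{r+1,s+1} ∘ ∂_h^{r,s} = − ∂_h^{r+1,s+1} ∘ ∂_v^{r,s} for all r ≥ 1, s ≥ 1 (and the appropriate degenerate cases for r = 0). -/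
open scoped Classical

/-- `(r,s)`-cochains: functions of `r + s` arguments of `H` with values in `I`
(recording the canonical identification of `Hom(ℤ[H̄^r] ⊗ M̄(s), I)` with a
subgroup of the group of such functions). -/
abbrev Coch (H I : Type*) (r s : ℕ) : Type _ := (Fin r → H) → (Fin s → H) → I

/-- A cochain is normalized if it vanishes whenever one of its arguments is `0`;
this encodes the extension-by-zero of maps defined on `H̄ = H \ {0}`. -/
def Normalized {H I : Type*} [AddCommGroup H] [AddCommGroup I] {r s : ℕ}
    (f : Coch H I r s) : Prop :=
  ∀ a b, ((∃ i, a i = 0) ∨ (∃ j, b j = 0)) → f a b = 0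

/-- `σ` is an `(l, s-l)`-shuffle. -/
def IsShuffle (s l : ℕ) (σ : Equiv.Perm (Fin s)) : Prop :=
  (∀ i j : Fin s, i < j → (j : ℕ) < l → σ i < σ j) ∧
  (∀ i j : Fin s, i < j → l ≤ (i : ℕ) → σ i < σ j)

/-- A cochain kills all shuffle sums in its last `s` arguments; this encodes
membership in `Hom(ℤ[H̄^r] ⊗ M̄(s), I)` where `M̄(s) = ℤ[H̄^s]/sh(ℤ[H̄^s])`. -/
def ShuffleRel {H I : Type*} [AddCommGroup H] [AddCommGroup I] {r s : ℕ}
    (f : Coch H I r s) : Prop :=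
  ∀ l : ℕ, 1 ≤ l → l < s → ∀ (a : Fin r → H) (b : Fin s → H),
    ∑ σ : Equiv.Perm (Fin s),
      (if IsShuffle s l σ then (Equiv.Perm.sign σ : ℤ) • f a (fun k => b (σ.symm k))
       else 0) = 0

/-- Replace the `j`-th and `(j+1)`-th entries of a tuple by their sum. -/
def mergeAt {A : Type*} [Add A] {n : ℕ} (a : Fin (n + 1) → A) (j : ℕ) :
    Fin n → A :=
  fun i =>
    if (i : ℕ) < j then a (Fin.castSucc i)
    else if (i : ℕ) = j then a (Fin.castSucc i) + a i.succ
    else a i.succ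

/-- The horizontal differential `∂ₕ : Ĉ_N^{r,s} → Ĉ_N^{r+1,s}`. -/
def dH {H I : Type*} [AddCommGroup H] [AddCommGroup I] (cH : LCS H)
    (d : H → I → I) {r s : ℕ} (f : Coch H I r s) : Coch H I (r + 1) s :=
  fun a b =>
    f (fun i : Fin r => cH.dot (a 0) (a i.succ)) (fun j => cH.dot (a 0) (b j)) +
      ∑ j ∈ Finset.range r, (-1 : ℤ) ^ (j + 1) • f (mergeAt a j) b +
      (-1 : ℤ) ^ (r + 1) •
        d (cH.dot (∑ i : Fin r, a (Fin.castSucc i)) (a (Fin.last r)))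
          (f (fun i : Fin r => a (Fin.castSucc i)) b)

/-- The vertical differential `∂ᵥ : Ĉ_N^{r,s} → Ĉ_N^{r,s+1}`. -/
def dV {H I : Type*} [AddCommGroup H] [AddCommGroup I] {r s : ℕ}
    (f : Coch H I r s) : Coch H I r (s + 1) :=
  fun a b =>
    (-1 : ℤ) ^ r • f a (fun j : Fin s => b j.succ) +
      ∑ j ∈ Finset.range s, (-1 : ℤ) ^ (r + 1 + j) • f a (mergeAt b j) +
      (-1 : ℤ) ^ (r + s + 1) • f a (fun j : Fin s => b (Fin.castSucc j))

/-- The diagonal map `D_{rs}^{r+s,1} : Ĉ_N^{r,s} → Ĉ_N^{r+s,1}`. -/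
def Dmap {H I : Type*} [AddCommGroup H] [AddCommGroup I] (cH : LCS H)
    (d : H → I → I) (yl : I → H → I) {r s : ℕ} (f : Coch H I r s) :
    Coch H I (r + s) 1 :=
  fun a b =>
    (-1 : ℤ) ^ (r + s) •
      yl
        (d (cH.dot (∑ i : Fin r, a (Fin.castAdd s i)) (∑ j : Fin s, a (Fin.natAdd r j)))
          (f (fun i : Fin r => a (Fin.castAdd s i)) (fun j : Fin s => a (Fin.natAdd r j))))
        (cH.dot (∑ i : Fin (r + s), a i) (b 0))

/-!
Both differentials are alternating sums of face maps. The vertical faces drop the first or last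
of the last `s` arguments or add up two neighbouring ones; the horizontal faces do the same to the
first `r + 1` arguments, except that face `0` lets the first argument act on all the others
through the cycle-set operation and the last face acts on the value through `d`. All these faces
satisfy the simplicial identities `∂ₘ ∂ₖ₊₁ = ∂ₖ ∂ₘ` (`m ≤ k`). Besides the linearity of the left
translations, the horizontal ones need `(a + b) · c = (a · b) · (a · c)` whenever face `0` is
involved and, for the last two faces, the brace relation, which turns `(s · u, (s + u) · t)` into
the product `s · (u + t)`, so that `d` of that product is the composite of the two `d`'s. Hence
`∂∂ = 0` by the usual pairwise cancellation, and since horizontal and vertical faces commute,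
`∂ᵥ ∂ₕ = -∂ₕ ∂ᵥ` by the extra sign `(-1)ʳ` in `∂ᵥ`.
-/

open Finset

section TupleFace

variable {A : Type*}

/-- `tupleFace 0` drops the first entry, `tupleFace k` for `1 ≤ k ≤ n` adds up the entries
`k - 1` and `k`, and `tupleFace k` for `k > n` drops the last entry. -/
def tupleFace [Add A] {n : ℕ} (k : ℕ) (b : Fin (n + 1) → A) : Fin n → A :=
  fun i => if (i : ℕ) + 1 < k then b i.castSucc
    else if (i : ℕ) + 1 = k then b i.castSucc + b i.succ
    else b i.succ

section Add

variable [Add A] {n : ℕ}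

theorem mergeAt_eq_tupleFace (b : Fin (n + 1) → A) (j : ℕ) :
    mergeAt b j = tupleFace (j + 1) b := by
  funext i
  simp only [mergeAt, tupleFace]
  split_ifs <;> first | rfl | omega

theorem tupleFace_zero (b : Fin (n + 1) → A) : tupleFace 0 b = fun i => b i.succ := by
  funext i
  simp [tupleFace]

theorem tupleFace_of_lt (b : Fin (n + 1) → A) {k : ℕ} (hk : n < k) :
    tupleFace k b = fun i => b i.castSucc := by
  funext i
  simp [tupleFace, show (i : ℕ) + 1 < k by omega]

theorem tupleFace_apply_zero (b : Fin (n + 2) → A) {k : ℕ} (hk : 2 ≤ k) :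
    tupleFace k b 0 = b 0 := by
  simp [tupleFace, show 1 < k by omega]

theorem tupleFace_one_apply_zero (b : Fin (n + 2) → A) : tupleFace 1 b 0 = b 0 + b 1 := by
  simp [tupleFace]

theorem tupleFace_one_apply_succ (b : Fin (n + 2) → A) (i : Fin n) :
    tupleFace 1 b i.succ = b i.succ.succ := by
  simp [tupleFace]

theorem tupleFace_apply_last (b : Fin (n + 2) → A) {k : ℕ} (hk : k ≤ n) :
    tupleFace k b (Fin.last n) = b (Fin.last (n + 1)) := by
  simp [tupleFace, show ¬ n + 1 < k by omega, show n + 1 ≠ k by omega]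

theorem tupleFace_last_apply_last (b : Fin (n + 2) → A) :
    tupleFace (n + 1) b (Fin.last n) = b (Fin.last n).castSucc + b (Fin.last (n + 1)) := by
  simp [tupleFace]

theorem tupleFace_last_apply_castSucc (b : Fin (n + 2) → A) (i : Fin n) :
    tupleFace (n + 1) b i.castSucc = b i.castSucc.castSucc := by
  simp [tupleFace]

theorem tupleFace_succ_apply_succ (b : Fin (n + 2) → A) (k : ℕ) (i : Fin n) :
    tupleFace (k + 1) b i.succ = tupleFace k (fun i => b i.succ) i := by
  simp only [tupleFace, Fin.val_succ, Fin.succ_castSucc]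
  split_ifs <;> first | rfl | omega

theorem tupleFace_apply_castSucc (b : Fin (n + 2) → A) (k : ℕ) (i : Fin n) :
    tupleFace k b i.castSucc = tupleFace k (fun i => b i.castSucc) i := by
  simp only [tupleFace, Fin.val_castSucc, Fin.succ_castSucc]

theorem tupleFace_comp {B : Type*} [Add B] {φ : A → B}
    (hφ : ∀ x y, φ (x + y) = φ x + φ y) (b : Fin (n + 1) → A) (k : ℕ) :
    tupleFace k (fun i => φ (b i)) = fun i => φ (tupleFace k b i) := by
  funext i
  simp only [tupleFace]
  split_ifs <;> simp [hφ]

end Add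

theorem tupleFace_tupleFace_succ [AddSemigroup A] {n : ℕ} (b : Fin (n + 2) → A) {k m : ℕ}
    (h : m ≤ k) : tupleFace m (tupleFace (k + 1) b) = tupleFace k (tupleFace m b) := by
  funext i
  simp only [tupleFace, Fin.val_castSucc, Fin.val_succ, Fin.succ_castSucc]
  split_ifs <;> first | rfl | omega | exact (add_assoc _ _ _).symm

theorem sum_tupleFace [AddCommMonoid A] {k : ℕ} (hk : 1 ≤ k) :
    ∀ {n : ℕ} (b : Fin (n + 1) → A), k ≤ n → ∑ i, tupleFace k b i = ∑ i, b i := by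
  induction k, hk using Nat.le_induction with
  | base =>
    rintro (_ | n) b hn
    · omega
    rw [Fin.sum_univ_succ, Fin.sum_univ_succ, Fin.sum_univ_succ (f := fun i => b i.succ),
      tupleFace_one_apply_zero, add_assoc]
    simp only [tupleFace_one_apply_succ, Fin.succ_zero_eq_one]
  | succ k hk ih =>
    rintro (_ | n) b hn
    · omega
    rw [Fin.sum_univ_succ, Fin.sum_univ_succ (f := b), tupleFace_apply_zero b (by omega),
      ← ih (fun i => b i.succ) (by omega)]
    simp only [tupleFace_succ_apply_succ]

end TupleFace

/-- The cancellation behind `∂ ∘ ∂ = 0` for the alternating sum of face maps: under the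
simplicial identity, the term `(k + 1, m)` with `m ≤ k` cancels the term `(m, k)`. -/
theorem sum_range_sum_range_neg_one_pow_smul_eq_zero {M : Type*} [AddCommGroup M] (n : ℕ)
    (G : ℕ → ℕ → M) (hG : ∀ k m, m ≤ k → k ≤ n → G (k + 1) m = G m k) :
    ∑ k ∈ range (n + 2), ∑ m ∈ range (n + 1), (-1 : ℤ) ^ (k + m) • G k m = 0 := by
  rw [← sum_product', ← sum_filter_add_sum_filter_not _ (fun p => p.2 < p.1),
    add_eq_zero_iff_eq_neg, ← sum_neg_distrib]
  refine sum_nbij' (fun p => (p.2, p.1 - 1)) (fun p => (p.2 + 1, p.1)) ?_ ?_ ?_ ?_ ?_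
  all_goals
    rintro ⟨k, m⟩ hp
    simp only [mem_filter, mem_product, mem_range] at hp
  · simp only [mem_filter, mem_product, mem_range]; omega
  · simp only [mem_filter, mem_product, mem_range]; omega
  · dsimp only; rw [Prod.mk.injEq]; omega
  · dsimp only; rw [Prod.mk.injEq]; omega
  · dsimp only
    obtain ⟨j, rfl⟩ : ∃ j, k = j + 1 := ⟨k - 1, by omega⟩
    rw [hG _ _ (by omega) (by omega), Nat.add_sub_cancel, add_right_comm, pow_succ, mul_neg_one,
      neg_smul, add_comm j]

theorem map_sum_zsmul_of_map_add {M : Type*} [AddCommGroup M] {φ : M → M}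
    (hφ : ∀ x y, φ (x + y) = φ x + φ y) {ι : Type*} (t : Finset ι) (c : ι → ℤ)
    (g : ι → M) : φ (∑ i ∈ t, c i • g i) = ∑ i ∈ t, c i • φ (g i) := by
  let Φ := AddMonoidHom.mk' φ hφ
  exact (map_sum Φ _ t).trans (sum_congr rfl fun i _ => map_zsmul Φ (c i) (g i))

namespace LCS

variable {H : Type*} [AddCommGroup H] (cH : LCS H)

theorem dot_sum {ι : Type*} (a : H) (t : Finset ι) (g : ι → H) :
    cH.dot a (∑ i ∈ t, g i) = ∑ i ∈ t, cH.dot a (g i) :=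
  map_sum (AddMonoidHom.mk' (cH.dot a) (cH.dot_add a)) g t

theorem mul_dot_eq_add {mul : H → H → H} (hmul : ∀ h h', cH.dot h (mul h h' - h) = h')
    (h x : H) : mul h (cH.dot h x) = h + x :=
  sub_eq_iff_eq_add'.mp ((cH.bij h).1 (hmul h (cH.dot h x)))

theorem mul_dot_dot_add {mul : H → H → H} (hmul : ∀ h h', cH.dot h (mul h h' - h) = h')
    (s u t : H) : mul (cH.dot s u) (cH.dot (s + u) t) = cH.dot s (u + t) := by
  rw [cH.add_dot, cH.mul_dot_eq_add hmul, cH.dot_add]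

end LCS

section Faces

variable {H I : Type*} [AddCommGroup H] (cH : LCS H) (d : H → I → I)
  {r s : ℕ}

def hFace (k : ℕ) (f : Coch H I r s) : Coch H I (r + 1) s := fun a b =>
  if k = 0 then f (fun i => cH.dot (a 0) (a i.succ)) (fun j => cH.dot (a 0) (b j))
  else if k ≤ r then f (tupleFace k a) b
  else d (cH.dot (∑ i : Fin r, a i.castSucc) (a (Fin.last r))) (f (fun i => a i.castSucc) b)

variable (f : Coch H I r s)

theorem hFace_zero_apply (a : Fin (r + 1) → H) (b : Fin s → H) :
    hFace cH d 0 f a b = f (fun i => cH.dot (a 0) (a i.succ)) (fun j => cH.dot (a 0) (b j)) :=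
  if_pos rfl

theorem hFace_apply_of_le {k : ℕ} (hk₀ : 1 ≤ k) (hk : k ≤ r) (a : Fin (r + 1) → H)
    (b : Fin s → H) : hFace cH d k f a b = f (tupleFace k a) b := by
  simp [hFace, show k ≠ 0 by omega, hk]

theorem hFace_apply_of_lt {k : ℕ} (hk : r < k) (a : Fin (r + 1) → H) (b : Fin s → H) :
    hFace cH d k f a b
      = d (cH.dot (∑ i : Fin r, a i.castSucc) (a (Fin.last r))) (f (fun i => a i.castSucc) b) := by
  simp [hFace, show k ≠ 0 by omega, show ¬ k ≤ r by omega]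

theorem dH_apply [AddCommGroup I] (a : Fin (r + 1) → H) (b : Fin s → H) :
    dH cH d f a b = ∑ k ∈ range (r + 2), (-1 : ℤ) ^ k • hFace cH d k f a b := by
  rw [sum_range_succ, sum_range_succ', hFace_zero_apply, hFace_apply_of_lt cH d f (by omega),
    pow_zero, one_smul, dH, add_comm (∑ k ∈ range r, _)]
  congr 2
  refine sum_congr rfl fun j hj => ?_
  rw [hFace_apply_of_le cH d f (by omega) (by simp at hj; omega), mergeAt_eq_tupleFace]

theorem dV_apply [AddCommGroup I] (a : Fin r → H) (b : Fin (s + 1) → H) :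
    dV f a b = ∑ k ∈ range (s + 2), (-1 : ℤ) ^ (r + k) • f a (tupleFace k b) := by
  rw [sum_range_succ, sum_range_succ', tupleFace_zero, tupleFace_of_lt b (by omega), dV,
    add_zero]
  simp only [mergeAt_eq_tupleFace, add_assoc, add_comm 1]
  abel

section SimplicialIdentities

variable (a : Fin (r + 2) → H) (b : Fin s → H)

theorem hFace_one_hFace_zero :
    hFace cH d 1 (hFace cH d 0 f) a b = hFace cH d 0 (hFace cH d 0 f) a b := by
  simp only [hFace_apply_of_le cH d _ le_rfl (Nat.le_add_left 1 r), hFace_zero_apply,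
    tupleFace_one_apply_zero, tupleFace_one_apply_succ, cH.add_dot, Fin.succ_zero_eq_one]

theorem hFace_succ_hFace_zero {k : ℕ} (hk₀ : 1 ≤ k) (hk : k ≤ r) :
    hFace cH d (k + 1) (hFace cH d 0 f) a b = hFace cH d 0 (hFace cH d k f) a b := by
  rw [hFace_apply_of_le cH d _ (by omega) (by omega), hFace_zero_apply, hFace_zero_apply,
    hFace_apply_of_le cH d _ hk₀ hk, tupleFace_apply_zero a (by omega),
    tupleFace_comp (cH.dot_add (a 0))]
  simp only [tupleFace_succ_apply_succ]

theorem hFace_last_hFace_zero :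
    hFace cH d (r + 2) (hFace cH d 0 f) a b = hFace cH d 0 (hFace cH d (r + 1) f) a b := by
  rw [hFace_apply_of_lt cH d _ (by omega), hFace_zero_apply, hFace_zero_apply,
    hFace_apply_of_lt cH d _ (by omega), ← cH.dot_sum, ← cH.add_dot, Fin.sum_univ_succ]
  simp only [Fin.castSucc_zero, Fin.succ_castSucc, Fin.succ_last]

theorem hFace_succ_hFace_of_pos {k m : ℕ} (hm : 1 ≤ m) (hmk : m ≤ k) (hk : k ≤ r) :
    hFace cH d (k + 1) (hFace cH d m f) a b = hFace cH d m (hFace cH d k f) a b := by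
  rw [hFace_apply_of_le cH d _ (by omega) (by omega), hFace_apply_of_le cH d _ hm (by omega),
    hFace_apply_of_le cH d _ hm (by omega), hFace_apply_of_le cH d _ (by omega) hk,
    tupleFace_tupleFace_succ a hmk]

theorem hFace_last_hFace_of_pos {m : ℕ} (hm₀ : 1 ≤ m) (hm : m ≤ r) :
    hFace cH d (r + 2) (hFace cH d m f) a b = hFace cH d m (hFace cH d (r + 1) f) a b := by
  rw [hFace_apply_of_lt cH d _ (by omega), hFace_apply_of_le cH d _ hm₀ hm,
    hFace_apply_of_le cH d _ hm₀ (by omega), hFace_apply_of_lt cH d _ (by omega),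
    tupleFace_apply_last a hm]
  simp only [tupleFace_apply_castSucc]
  rw [sum_tupleFace hm₀ _ hm]

theorem hFace_last_hFace_last {mul : H → H → H} (hmul : ∀ h h', cH.dot h (mul h h' - h) = h')
    (hd : ∀ (h h' : H) (y : I), d (mul h' h) y = d h (d h' y)) :
    hFace cH d (r + 2) (hFace cH d (r + 1) f) a b
      = hFace cH d (r + 1) (hFace cH d (r + 1) f) a b := by
  rw [hFace_apply_of_lt cH d _ (by omega), hFace_apply_of_lt cH d _ (by omega),
    hFace_apply_of_le cH d _ (by omega) le_rfl, hFace_apply_of_lt cH d _ (by omega),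
    tupleFace_last_apply_last, Fin.sum_univ_castSucc, ← cH.mul_dot_dot_add hmul, hd]
  simp only [tupleFace_last_apply_castSucc]

theorem hFace_succ_hFace {mul : H → H → H} (hmul : ∀ h h', cH.dot h (mul h h' - h) = h')
    (hd : ∀ (h h' : H) (y : I), d (mul h' h) y = d h (d h' y)) {k m : ℕ} (hmk : m ≤ k)
    (hk : k ≤ r + 1) :
    hFace cH d (k + 1) (hFace cH d m f) a b = hFace cH d m (hFace cH d k f) a b := by
  obtain rfl | hm := Nat.eq_zero_or_pos m
  · obtain rfl | hk₀ := Nat.eq_zero_or_pos k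
    · exact hFace_one_hFace_zero cH d f a b
    obtain hkr | rfl := (show k ≤ r ∨ k = r + 1 by omega)
    · exact hFace_succ_hFace_zero cH d f a b hk₀ hkr
    · exact hFace_last_hFace_zero cH d f a b
  obtain hkr | rfl := (show k ≤ r ∨ k = r + 1 by omega)
  · exact hFace_succ_hFace_of_pos cH d f a b hm hmk hkr
  obtain hmr | rfl := (show m ≤ r ∨ m = r + 1 by omega)
  · exact hFace_last_hFace_of_pos cH d f a b hm hmr
  · exact hFace_last_hFace_last cH d f a b hmul hd

end SimplicialIdentities

theorem hFace_sum_smul [AddCommGroup I] (hd₁ : ∀ h y y', d h (y + y') = d h y + d h y')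
    {ι : Type*} (t : Finset ι) (c : ι → ℤ) (g : ι → Coch H I r s) (k : ℕ)
    (a : Fin (r + 1) → H) (b : Fin s → H) :
    hFace cH d k (fun a b => ∑ i ∈ t, c i • g i a b) a b
      = ∑ i ∈ t, c i • hFace cH d k (g i) a b := by
  simp only [hFace]
  split_ifs
  · rfl
  · rfl
  · exact map_sum_zsmul_of_map_add (hd₁ _) t c _

theorem hFace_apply_tupleFace (m k : ℕ) (a : Fin (r + 1) → H) (b : Fin (s + 1) → H) :
    hFace cH d m (fun a b => f a (tupleFace k b)) a b = hFace cH d m f a (tupleFace k b) := by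
  simp only [hFace, tupleFace_comp (cH.dot_add (a 0))]

end Faces

section DoubleComplex

variable {H I : Type*} [AddCommGroup H] [AddCommGroup I] {r s : ℕ} (cH : LCS H)
  (d : H → I → I) (f : Coch H I r s)

theorem dH_dH {mul : H → H → H}
    (hmul : ∀ h h', cH.dot h (mul h h' - h) = h')
    (hd₁ : ∀ h y y', d h (y + y') = d h y + d h y')
    (hd : ∀ (h h' : H) (y : I), d (mul h' h) y = d h (d h' y)) :
    dH cH d (dH cH d f) = 0 := by
  funext a b
  rw [dH_apply, show dH cH d f = _ from funext₂ (dH_apply cH d f)]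
  simp only [hFace_sum_smul cH d hd₁, smul_sum, smul_smul, ← pow_add]
  exact sum_range_sum_range_neg_one_pow_smul_eq_zero (r + 1) _
    fun k m hmk hk => hFace_succ_hFace cH d f a b hmul hd hmk hk

theorem dV_dV : dV (dV f) = 0 := by
  funext a b
  have hsign : ∀ k m, (-1 : ℤ) ^ (r + k + (r + m)) = (-1) ^ (k + m) := fun k m => by
    rw [show r + k + (r + m) = k + m + 2 * r by ring, pow_add, pow_mul, neg_one_sq, one_pow,
      mul_one]
  simp only [dV_apply, smul_sum, smul_smul, ← pow_add, hsign]
  exact sum_range_sum_range_neg_one_pow_smul_eq_zero (s + 1)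
    (fun k m => f a (tupleFace m (tupleFace k b))) fun k m hmk _ => by
      rw [tupleFace_tupleFace_succ b hmk]

theorem dV_dH (hd₁ : ∀ h y y', d h (y + y') = d h y + d h y') :
    dV (dH cH d f) = -dH cH d (dV f) := by
  funext a b
  have hsign : ∀ k m, (-1 : ℤ) ^ (r + 1 + k + m) = -(-1) ^ (m + (r + k)) := fun k m => by
    rw [show r + 1 + k + m = m + (r + k) + 1 by ring, pow_succ, mul_neg_one]
  rw [Pi.neg_apply, Pi.neg_apply, show dV f = _ from funext₂ (dV_apply f)]
  simp only [dV_apply, dH_apply, hFace_sum_smul cH d hd₁, hFace_apply_tupleFace, smul_sum,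
    smul_smul, ← pow_add, hsign, neg_smul, sum_neg_distrib]
  rw [sum_comm]

end DoubleComplex

theorem statement14_general {H I : Type*} [AddCommGroup H] [AddCommGroup I]
    (cH : LCS H) (d : H → I → I)
    (mul : H → H → H) (hmul : ∀ h h', cH.dot h (mul h h' - h) = h')
    (hd1 : ∀ h y y', d h (y + y') = d h y + d h y')
    (hd3 : ∀ (h h' : H) (y : I), d (mul h' h) y = d h (d h' y)) :
    ∀ (r s : ℕ), 1 ≤ s → ∀ f : Coch H I r s, Normalized f → ShuffleRel f →
      dH cH d (dH cH d f) = 0 ∧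
      dV (dV f) = 0 ∧
      dV (dH cH d f) = -dH cH d (dV f) :=
  fun _ _ _ f _ _ => ⟨dH_dH cH d f hmul hd1 hd3, dV_dV f, dV_dH cH d f hd1⟩

/-- The diagram `(Ĉ_N^{**}(H,I), ∂ₕ^{**}, ∂ᵥ^{**})` is a double cochain complex:
`∂ₕ∘∂ₕ = 0`, `∂ᵥ∘∂ᵥ = 0` and `∂ᵥ∘∂ₕ = -∂ₕ∘∂ᵥ`.  Here `mul` is the brace product
of `H`, characterized by `h · (mul h h' - h) = h'`. -/
theorem statement14 {H I : Type*} [AddCommGroup H] [AddCommGroup I]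
    (cH : LCS H) (d : H → I → I)
    (mul : H → H → H) (hmul : ∀ h h', cH.dot h (mul h h' - h) = h')
    (hd1 : ∀ h y y', d h (y + y') = d h y + d h y')
    (hd2 : ∀ y, d 0 y = y)
    (hd3 : ∀ (h h' : H) (y : I), d (mul h' h) y = d h (d h' y)) :
    ∀ (r s : ℕ), 1 ≤ s → ∀ f : Coch H I r s, Normalized f → ShuffleRel f →
      dH cH d (dH cH d f) = 0 ∧
      dV (dV f) = 0 ∧
      dV (dH cH d f) = -dH cH d (dV f) :=
  statement14_general cH d mul hmul hd1 hd3
end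

section
/- Let H be a linear cycle set and I a trivial linear cycle set with a map ♦ : H×I → I such that h♦(y+y') = h♦y + h♦y', 0♦y = y, (h'h)♦y = h♦(h'♦y), and each map y ↦ h♦y is a bijection of I. Then there is a bijective correspondence between Ext_♦(H,I) — the set of equivalence classes of extensions (ι,B,π) of H by I such that for every set-theoretic section s of π with s(0) = 0 one has s(h)·ι(y) = ι(h♦y) and ι(y)·s(h) = s(h) for all h ∈ H, y ∈ I — and the second cohomology group H²_♦(H,I) of the total complex of the double cochain complex (Ĉ_N^{**}(H,I), ∂_h, ∂_v). -/
open scoped Classical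

universe u

/-- An extension `0 → I →^ι B →^π H → 0` of linear cycle sets. -/
structure LCSExtension (H I : Type u) [AddCommGroup H] [AddCommGroup I]
    (cH : LCS H) (cI : LCS I) where
  B : Type u
  [grp : AddCommGroup B]
  cB : LCS B
  ι : I →+ B
  π : B →+ H
  ι_dot : ∀ x y, ι (cI.dot x y) = cB.dot (ι x) (ι y)
  π_dot : ∀ a b, π (cB.dot a b) = cH.dot (π a) (π b)
  inj : Function.Injective ι
  surj : Function.Surjective π
  exact : ∀ b, π b = 0 ↔ b ∈ Set.range ι

attribute [instance] LCSExtension.grp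

/-- The extensions belonging to the class `Ext_♦(H,I)`: for every set-theoretic
section `s` of `π` with `s 0 = 0` one has `s h · ι y = ι (h ♦ y)` and
`ι y · s h = s h`. -/
def IsDiamondExt {H I : Type u} [AddCommGroup H] [AddCommGroup I]
    {cH : LCS H} {cI : LCS I} (d : H → I → I)
    (E : LCSExtension H I cH cI) : Prop :=
  ∀ s : H → E.B, (∀ h, E.π (s h) = h) → s 0 = 0 →
    ∀ (h : H) (y : I),
      E.cB.dot (s h) (E.ι y) = E.ι (d h y) ∧ E.cB.dot (E.ι y) (s h) = s h

/-- Equivalence of extensions of `H` by `I`. -/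
def ExtEquiv {H I : Type u} [AddCommGroup H] [AddCommGroup I]
    {cH : LCS H} {cI : LCS I} (E E' : LCSExtension H I cH cI) : Prop :=
  ∃ φ : E.B →+ E'.B,
    (∀ a b, φ (E.cB.dot a b) = E'.cB.dot (φ a) (φ b)) ∧
    (∀ b, E'.π (φ b) = E.π b) ∧ (∀ y, φ (E.ι y) = E'.ι y)

/-- `Ext_♦(H,I)`: equivalence classes of extensions of `H` by `I` with trivial
`≪` and action `♦`. -/
def ExtDiamond (H I : Type u) [AddCommGroup H] [AddCommGroup I]
    (cH : LCS H) (cI : LCS I) (d : H → I → I) : Type (u + 1) :=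
  Quot fun E E' : { E : LCSExtension H I cH cI // IsDiamondExt d E } =>
    ExtEquiv E.1 E'.1

/-- 2-cocycles of the total complex of `(Ĉ_N^{**}(H,I), ∂ₕ, ∂ᵥ)`. -/
def Z2cond {H I : Type u} [AddCommGroup H] [AddCommGroup I] (cH : LCS H)
    (d : H → I → I) (p : Coch H I 0 2 × Coch H I 1 1) : Prop :=
  Normalized p.1 ∧ ShuffleRel p.1 ∧ Normalized p.2 ∧ ShuffleRel p.2 ∧
    dV p.1 = 0 ∧ dH cH d p.1 + dV p.2 = 0 ∧ dH cH d p.2 = 0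

/-- Two 2-cocycles differ by the coboundary of a (normalized) 1-cochain. -/
def CobRel {H I : Type u} [AddCommGroup H] [AddCommGroup I] (cH : LCS H)
    (d : H → I → I)
    (p q : { p : Coch H I 0 2 × Coch H I 1 1 // Z2cond cH d p }) : Prop :=
  ∃ φ : Coch H I 0 1, Normalized φ ∧
    p.1.1 = q.1.1 + dV φ ∧ p.1.2 = q.1.2 + dH cH d φ

/-- The second cohomology group `H²_♦(H,I)` of the total complex of the double
cochain complex `(Ĉ_N^{**}(H,I), ∂ₕ, ∂ᵥ)`. -/
def H2Diamond (H I : Type u) [AddCommGroup H] [AddCommGroup I] (cH : LCS H)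
    (d : H → I → I) : Type u :=
  Quot (CobRel cH d)
set_option linter.unusedSectionVars false

namespace St16
variable {H I : Type u} [AddCommGroup H] [AddCommGroup I]

theorem lcs_dot_zero (c : LCS H) (a : H) : c.dot a 0 = 0 := by
  have h := c.dot_add a 0 0
  rw [add_zero] at h
  have h2 : c.dot a 0 + 0 = c.dot a 0 + c.dot a 0 := by rw [add_zero]; exact h
  exact (add_left_cancel h2).symm

theorem lcs_zero_dot (c : LCS H) (a : H) : c.dot 0 a = a := by
  have h := c.add_dot 0 0 a
  rw [add_zero, lcs_dot_zero] at h
  exact ((c.bij 0).1 h).symm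

theorem lcs_dot_sub (c : LCS H) (a x y : H) : c.dot a (x - y) = c.dot a x - c.dot a y :=
  map_sub (AddMonoidHom.mk' (c.dot a) (c.dot_add a)) x y

theorem lcs_dot_neg (c : LCS H) (a x : H) : c.dot a (-x) = - c.dot a x :=
  map_neg (AddMonoidHom.mk' (c.dot a) (c.dot_add a)) x

section d
variable (cH : LCS H) (d : H → I → I) (mul : H → H → H)

theorem d_sub (hd1 : ∀ h y y', d h (y + y') = d h y + d h y') (h : H) (x y : I) :
    d h (x - y) = d h x - d h y :=
  map_sub (AddMonoidHom.mk' (d h) (hd1 h)) x y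

theorem d_zero (hd1 : ∀ h y y', d h (y + y') = d h y + d h y') (h : H) :
    d h 0 = 0 :=
  map_zero (AddMonoidHom.mk' (d h) (hd1 h))

theorem d_add_eq (hmul : ∀ h h', cH.dot h (mul h h' - h) = h')
    (hd3 : ∀ (h h' : H) (y : I), d (mul h' h) y = d h (d h' y))
    (h h' : H) (y : I) : d (h + h') y = d (cH.dot h h') (d h y) := by
  have h1 : mul h (cH.dot h h') = h + h' := by
    have h2 := hmul h (cH.dot h h')
    have h3 : mul h (cH.dot h h') - h = h' := (cH.bij h).1 h2
    have := sub_eq_iff_eq_add.mp h3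
    rw [this, add_comm]
  rw [← h1, hd3]
end d

/-- The unique element of `Fin 0 → H`. -/
def e0 : Fin 0 → H := fun i => i.elim0

theorem fin0_eq (a : Fin 0 → H) : a = e0 := funext fun i => i.elim0

theorem eta1 (b : Fin 1 → H) : ![b 0] = b := by
  funext j; fin_cases j <;> rfl

theorem eta2 (b : Fin 2 → H) : ![b 0, b 1] = b := by
  funext j; fin_cases j <;> rfl

section evals
variable (cH : LCS H) (d : H → I → I)

theorem dV02_eval (g : Coch H I 0 2) (a : Fin 0 → H) (b : Fin 3 → H) :
    dV g a b = g a ![b 1, b 2] - g a ![b 0 + b 1, b 2] + g a ![b 0, b 1 + b 2]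
      - g a ![b 0, b 1] := by
  have h1 : (fun j : Fin 2 => b j.succ) = ![b 1, b 2] := by
    funext j; fin_cases j <;> rfl
  have h2 : mergeAt b 0 = ![b 0 + b 1, b 2] := by
    funext j; fin_cases j <;> rfl
  have h3 : mergeAt b 1 = ![b 0, b 1 + b 2] := by
    funext j; fin_cases j <;> rfl
  have h4 : (fun j : Fin 2 => b (Fin.castSucc j)) = ![b 0, b 1] := by
    funext j; fin_cases j <;> rfl
  unfold dV
  rw [Finset.sum_range_succ, Finset.sum_range_succ, Finset.sum_range_zero,
    h1, h2, h3, h4]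
  norm_num
  abel

theorem dH02_eval (g : Coch H I 0 2) (a : Fin 1 → H) (b : Fin 2 → H) :
    dH cH d g a b = g e0 ![cH.dot (a 0) (b 0), cH.dot (a 0) (b 1)]
      - d (a 0) (g e0 b) := by
  have h1 : (fun j : Fin 2 => cH.dot (a 0) (b j))
      = ![cH.dot (a 0) (b 0), cH.dot (a 0) (b 1)] := by
    funext j; fin_cases j <;> rfl
  unfold dH
  rw [Finset.sum_range_zero, h1, fin0_eq (fun i : Fin 0 => cH.dot (a 0) (a i.succ)),
    fin0_eq (fun i : Fin 0 => a (Fin.castSucc i))]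
  have h2 : Finset.univ.sum (e0 (H := H)) = 0 := by simp [e0]
  have h3 : a (Fin.last 0) = a 0 := rfl
  rw [h2, h3, lcs_zero_dot cH]
  norm_num
  abel

theorem dV11_eval (f : Coch H I 1 1) (a : Fin 1 → H) (b : Fin 2 → H) :
    dV f a b = -f a ![b 1] + f a ![b 0 + b 1] - f a ![b 0] := by
  have h1 : (fun j : Fin 1 => b j.succ) = ![b 1] := by funext j; fin_cases j <;> rfl
  have h2 : mergeAt b 0 = ![b 0 + b 1] := by funext j; fin_cases j <;> rfl
  have h4 : (fun j : Fin 1 => b (Fin.castSucc j)) = ![b 0] := by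
    funext j; fin_cases j <;> rfl
  unfold dV
  rw [Finset.sum_range_succ, Finset.sum_range_zero, h1, h2, h4]
  norm_num
  abel

theorem dH11_eval (f : Coch H I 1 1) (a : Fin 2 → H) (b : Fin 1 → H) :
    dH cH d f a b = f ![cH.dot (a 0) (a 1)] ![cH.dot (a 0) (b 0)]
      - f ![a 0 + a 1] b + d (cH.dot (a 0) (a 1)) (f ![a 0] b) := by
  have h1 : (fun i : Fin 1 => cH.dot (a 0) (a i.succ)) = ![cH.dot (a 0) (a 1)] := by
    funext j; fin_cases j <;> rfl
  have h2 : (fun j : Fin 1 => cH.dot (a 0) (b j)) = ![cH.dot (a 0) (b 0)] := by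
    funext j; fin_cases j <;> rfl
  have h3 : mergeAt a 0 = ![a 0 + a 1] := by funext j; fin_cases j <;> rfl
  have h4 : (fun i : Fin 1 => a (Fin.castSucc i)) = ![a 0] := by
    funext j; fin_cases j <;> rfl
  have h6 : a (Fin.last 1) = a 1 := rfl
  unfold dH
  rw [Finset.sum_range_succ, Finset.sum_range_zero, h1, h2, h3, h4, h6]
  have h5 : Finset.univ.sum ![a 0] = a 0 := by simp
  rw [h5]
  norm_num
  abel

theorem dV01_eval (φ : Coch H I 0 1) (a : Fin 0 → H) (b : Fin 2 → H) :
    dV φ a b = φ a ![b 1] - φ a ![b 0 + b 1] + φ a ![b 0] := by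
  have h1 : (fun j : Fin 1 => b j.succ) = ![b 1] := by funext j; fin_cases j <;> rfl
  have h2 : mergeAt b 0 = ![b 0 + b 1] := by funext j; fin_cases j <;> rfl
  have h4 : (fun j : Fin 1 => b (Fin.castSucc j)) = ![b 0] := by
    funext j; fin_cases j <;> rfl
  unfold dV
  rw [Finset.sum_range_succ, Finset.sum_range_zero, h1, h2, h4]
  norm_num
  abel

theorem dH01_eval (φ : Coch H I 0 1) (a : Fin 1 → H) (b : Fin 1 → H) :
    dH cH d φ a b = φ e0 ![cH.dot (a 0) (b 0)] - d (a 0) (φ e0 b) := by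
  have h1 : (fun j : Fin 1 => cH.dot (a 0) (b j)) = ![cH.dot (a 0) (b 0)] := by
    funext j; fin_cases j <;> rfl
  unfold dH
  rw [Finset.sum_range_zero, h1, fin0_eq (fun i : Fin 0 => cH.dot (a 0) (a i.succ)),
    fin0_eq (fun i : Fin 0 => a (Fin.castSucc i))]
  have h2 : Finset.univ.sum (e0 (H := H)) = 0 := by simp [e0]
  have h3 : a (Fin.last 0) = a 0 := rfl
  rw [h2, h3, lcs_zero_dot cH]
  norm_num
  abel

end evals
end St16

namespace St16

theorem isShuffle_two (σ : Equiv.Perm (Fin 2)) : IsShuffle 2 1 σ := by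
  constructor
  · intro i j hij h1
    exact absurd h1 (by have := Fin.lt_def.mp hij; omega)
  · intro i j hij h1
    have h2 := Fin.lt_def.mp hij
    have h3 := j.isLt
    exact absurd h3 (by omega)

theorem permFin2_univ :
    (Finset.univ : Finset (Equiv.Perm (Fin 2))) = {Equiv.refl (Fin 2), Equiv.swap 0 1} := by
  symm
  apply Finset.eq_univ_of_card
  rw [Finset.card_insert_of_notMem, Finset.card_singleton]
  · simp [Fintype.card_perm]
  · simp only [Finset.mem_singleton]
    intro hcon
    have h0 := Equiv.ext_iff.mp hcon 0
    simp [Equiv.swap_apply_left] at h0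

variable {H I : Type u} [AddCommGroup H] [AddCommGroup I]

theorem shuffle_sum_two (g : Coch H I 0 2) (a : Fin 0 → H) (b : Fin 2 → H) :
    (∑ σ : Equiv.Perm (Fin 2),
      (if IsShuffle 2 1 σ then (Equiv.Perm.sign σ : ℤ) • g a (fun k => b (σ.symm k))
       else 0)) = g a b - g a ![b 1, b 0] := by
  rw [permFin2_univ, Finset.sum_insert (by
    simp only [Finset.mem_singleton]
    intro hcon
    have h0 := Equiv.ext_iff.mp hcon 0
    simp [Equiv.swap_apply_left] at h0), Finset.sum_singleton]
  rw [if_pos (isShuffle_two _), if_pos (isShuffle_two _)]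
  have e1 : (fun k => b ((Equiv.refl (Fin 2)).symm k)) = b := rfl
  have e2 : (fun k => b ((Equiv.swap (0 : Fin 2) 1).symm k)) = ![b 1, b 0] := by
    funext k
    rw [Equiv.symm_swap]
    fin_cases k
    · simp [Equiv.swap_apply_left]
    · simp [Equiv.swap_apply_right]
  rw [e1, e2]
  have s1 : (Equiv.Perm.sign (Equiv.refl (Fin 2)) : ℤ) = 1 := by simp
  have s2 : (Equiv.Perm.sign (Equiv.swap (0 : Fin 2) 1) : ℤ) = -1 := by
    rw [Equiv.Perm.sign_swap (by decide)]; rfl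
  rw [s1, s2]
  simp
  abel

/-- Scalar form of the 2-cocycle conditions. -/
structure Scal (cH : LCS H) (d : H → I → I) (Γ : H → H → I) (Φ : H → H → I) : Prop where
  sym : ∀ h k, Γ h k = Γ k h
  normR : ∀ h, Γ h 0 = 0
  normL : ∀ h, Γ 0 h = 0
  coc : ∀ x y z, Γ y z - Γ (x + y) z + Γ x (y + z) - Γ x y = 0
  fnormR : ∀ h, Φ h 0 = 0
  fnormL : ∀ h, Φ 0 h = 0
  e2 : ∀ h h1 h2, Γ (cH.dot h h1) (cH.dot h h2) - d h (Γ h1 h2)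
        - Φ h h2 + Φ h (h1 + h2) - Φ h h1 = 0
  e3 : ∀ h h' k, Φ (cH.dot h h') (cH.dot h k) - Φ (h + h') k
        + d (cH.dot h h') (Φ h k) = 0

variable (cH : LCS H) (d : H → I → I)

/-- The scalar functions associated to a cochain pair. -/
def ΓOf (g : Coch H I 0 2) : H → H → I := fun h k => g e0 ![h, k]
def ΦOf (f : Coch H I 1 1) : H → H → I := fun h k => f ![h] ![k]

def cochOfScal (Γ Φ : H → H → I) : Coch H I 0 2 × Coch H I 1 1 :=
  (fun _ b => Γ (b 0) (b 1), fun a b => Φ (a 0) (b 0))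

theorem coch_eta (p : Coch H I 0 2 × Coch H I 1 1) :
    cochOfScal (ΓOf p.1) (ΦOf p.2) = p := by
  unfold cochOfScal ΓOf ΦOf
  refine Prod.ext ?_ ?_
  · funext a b
    show p.1 e0 ![b 0, b 1] = p.1 a b
    rw [eta2 b, fin0_eq a]
  · funext a b
    show p.2 ![a 0] ![b 0] = p.2 a b
    rw [eta1 b, eta1 a]

theorem scal_of_z2 (p : Coch H I 0 2 × Coch H I 1 1) (hp : Z2cond cH d p) :
    Scal cH d (ΓOf p.1) (ΦOf p.2) := by
  obtain ⟨n1, s1, n2, s2, c1, c2, c3⟩ := hp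
  constructor
  · intro h k
    have := s1 1 le_rfl one_lt_two e0 ![h, k]
    rw [shuffle_sum_two] at this
    have h2 : (![h, k] : Fin 2 → H) 1 = k := rfl
    have h3 : (![h, k] : Fin 2 → H) 0 = h := rfl
    rw [h2, h3, sub_eq_zero] at this
    exact this
  · intro h; exact n1 e0 ![h, 0] (Or.inr ⟨1, rfl⟩)
  · intro h; exact n1 e0 ![0, h] (Or.inr ⟨0, rfl⟩)
  · intro x y z
    have := congrFun (congrFun c1 e0) ![x, y, z]
    rw [dV02_eval] at this
    simpa [ΓOf] using this
  · intro h; exact n2 ![h] ![0] (Or.inr ⟨0, rfl⟩)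
  · intro h; exact n2 ![0] ![h] (Or.inl ⟨0, rfl⟩)
  · intro h h1 h2
    have := congrFun (congrFun c2 ![h]) ![h1, h2]
    rw [Pi.add_apply, Pi.add_apply, dH02_eval, dV11_eval, Pi.zero_apply,
      fin0_eq (e0 : Fin 0 → H)] at this
    unfold ΓOf ΦOf
    have hb : (![h1, h2] : Fin 2 → H) 0 = h1 := rfl
    have hb2 : (![h1, h2] : Fin 2 → H) 1 = h2 := rfl
    have ha : (![h] : Fin 1 → H) 0 = h := rfl
    rw [hb, hb2, ha] at this
    calc _ = (p.1 e0 ![cH.dot h h1, cH.dot h h2] - d h (p.1 e0 ![h1, h2]) +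
        (-p.2 ![h] ![h2] + p.2 ![h] ![h1 + h2] - p.2 ![h] ![h1])) := by abel
    _ = 0 := this
  · intro h h' k
    have := congrFun (congrFun c3 ![h, h']) ![k]
    rw [dH11_eval, Pi.zero_apply] at this
    unfold ΦOf
    have ha : (![h, h'] : Fin 2 → H) 0 = h := rfl
    have ha2 : (![h, h'] : Fin 2 → H) 1 = h' := rfl
    have hb : (![k] : Fin 1 → H) 0 = k := rfl
    rw [ha, ha2, hb] at this
    exact this

end St16

namespace St16
variable {H I : Type u} [AddCommGroup H] [AddCommGroup I]
variable (cH : LCS H) (d : H → I → I)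

theorem z2_of_scal (Γ Φ : H → H → I) (S : Scal cH d Γ Φ) :
    Z2cond cH d (cochOfScal Γ Φ) := by
  refine ⟨?_, ?_, ?_, ?_, ?_, ?_, ?_⟩
  · rintro a b (⟨i, hi⟩ | ⟨j, hj⟩)
    · exact absurd hi i.elim0
    · show Γ (b 0) (b 1) = 0
      fin_cases j
      · rw [show b 0 = 0 from hj, S.normL]
      · rw [show b 1 = 0 from hj, S.normR]
  · intro l hl1 hl2 a b
    obtain rfl : l = 1 := by omega
    rw [shuffle_sum_two]
    show Γ (b 0) (b 1) - Γ (![b 1, b 0] 0) (![b 1, b 0] 1) = 0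
    rw [show (![b 1, b 0] : Fin 2 → H) 0 = b 1 from rfl,
      show (![b 1, b 0] : Fin 2 → H) 1 = b 0 from rfl, S.sym (b 0) (b 1), sub_self]
  · rintro a b (⟨i, hi⟩ | ⟨j, hj⟩)
    · show Φ (a 0) (b 0) = 0
      rw [show a 0 = 0 from (Fin.eq_zero i) ▸ hi, S.fnormL]
    · show Φ (a 0) (b 0) = 0
      rw [show b 0 = 0 from (Fin.eq_zero j) ▸ hj, S.fnormR]
  · intro l hl1 hl2 a b
    exact absurd hl2 (by omega)
  · funext a b
    rw [dV02_eval, Pi.zero_apply]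
    show Γ (b 1) (b 2) - Γ (b 0 + b 1) (b 2) + Γ (b 0) (b 1 + b 2) - Γ (b 0) (b 1) = 0
    exact S.coc (b 0) (b 1) (b 2)
  · funext a b
    rw [Pi.add_apply, Pi.add_apply, dH02_eval, dV11_eval, Pi.zero_apply]
    show Γ (cH.dot (a 0) (b 0)) (cH.dot (a 0) (b 1)) - d (a 0) (Γ (b 0) (b 1)) +
      (-Φ (a 0) (b 1) + Φ (a 0) (b 0 + b 1) - Φ (a 0) (b 0)) = 0
    have := S.e2 (a 0) (b 0) (b 1)
    calc _ = Γ (cH.dot (a 0) (b 0)) (cH.dot (a 0) (b 1)) - d (a 0) (Γ (b 0) (b 1))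
        - Φ (a 0) (b 1) + Φ (a 0) (b 0 + b 1) - Φ (a 0) (b 0) := by abel
    _ = 0 := this
  · funext a b
    rw [dH11_eval, Pi.zero_apply]
    show Φ (cH.dot (a 0) (a 1)) (cH.dot (a 0) (b 0)) - Φ (a 0 + a 1) (b 0)
      + d (cH.dot (a 0) (a 1)) (Φ (a 0) (b 0)) = 0
    exact S.e3 (a 0) (a 1) (b 0)

end St16

namespace St16
variable {H I : Type u} [AddCommGroup H] [AddCommGroup I]

/-- Carrier of the extension built from a 2-cocycle. -/
structure Tw (I H : Type u) : Type u where
  y : I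
  h : H

variable (cH : LCS H) (d : H → I → I)

section TwGrp
variable (Γ Φ : H → H → I)

def twAdd : Tw I H → Tw I H → Tw I H :=
  fun x x' => ⟨x.y + x'.y + Γ x.h x'.h, x.h + x'.h⟩

def twNeg : Tw I H → Tw I H := fun x => ⟨-x.y - Γ x.h (-x.h), -x.h⟩

theorem coc' (S : Scal cH d Γ Φ) (x y z : H) : Γ x (y + z) = Γ x y + Γ (x + y) z - Γ y z := by
  have h := S.coc x y z
  have h2 : Γ x (y + z) - (Γ x y + Γ (x + y) z - Γ y z) = 0 := by
    calc Γ x (y + z) - (Γ x y + Γ (x + y) z - Γ y z)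
        = Γ y z - Γ (x + y) z + Γ x (y + z) - Γ x y := by abel
      _ = 0 := h
  exact sub_eq_zero.mp h2

theorem twAdd_assoc (S : Scal cH d Γ Φ) (x y z : Tw I H) :
    twAdd Γ (twAdd Γ x y) z = twAdd Γ x (twAdd Γ y z) := by
  unfold twAdd
  simp only [Tw.mk.injEq]
  refine ⟨?_, add_assoc _ _ _⟩
  rw [coc' cH d Γ Φ S x.h y.h z.h]
  abel

theorem twAdd_zero (S : Scal cH d Γ Φ) (x : Tw I H) : twAdd Γ x ⟨0, 0⟩ = x := by
  unfold twAdd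
  rw [S.normR, add_zero, add_zero, add_zero]

theorem twZero_add (S : Scal cH d Γ Φ) (x : Tw I H) : twAdd Γ ⟨0, 0⟩ x = x := by
  unfold twAdd
  rw [S.normL, add_zero, zero_add, zero_add]

theorem twNeg_add (S : Scal cH d Γ Φ) (x : Tw I H) : twAdd Γ (twNeg Γ x) x = ⟨0, 0⟩ := by
  unfold twAdd twNeg
  simp only [Tw.mk.injEq]
  refine ⟨?_, neg_add_cancel _⟩
  rw [S.sym (-x.h) x.h]
  abel

theorem twAdd_comm (S : Scal cH d Γ Φ) (x y : Tw I H) : twAdd Γ x y = twAdd Γ y x := by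
  unfold twAdd
  simp only [Tw.mk.injEq]
  exact ⟨by rw [S.sym x.h y.h]; abel, add_comm _ _⟩

def twGroup (S : Scal cH d Γ Φ) : AddCommGroup (Tw I H) :=
  letI : Zero (Tw I H) := ⟨⟨0, 0⟩⟩
  letI : Add (Tw I H) := ⟨twAdd Γ⟩
  letI : Neg (Tw I H) := ⟨twNeg Γ⟩
  { add := twAdd Γ
    zero := (⟨0, 0⟩ : Tw I H)
    neg := twNeg Γ
    nsmul := nsmulRec
    zsmul := zsmulRec
    add_assoc := twAdd_assoc cH d Γ Φ S
    zero_add := twZero_add cH d Γ Φ S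
    add_zero := twAdd_zero cH d Γ Φ S
    neg_add_cancel := twNeg_add cH d Γ Φ S
    add_comm := twAdd_comm cH d Γ Φ S }

end TwGrp
end St16

namespace St16
variable {H I : Type u} [AddCommGroup H] [AddCommGroup I]
variable (cH : LCS H) (d : H → I → I) (mul : H → H → H)

section MkExt
variable (Γ Φ : H → H → I)

def twDot : Tw I H → Tw I H → Tw I H :=
  fun x x' => ⟨d x.h x'.y - Φ x.h x'.h, cH.dot x.h x'.h⟩

theorem e2' (S : Scal cH d Γ Φ) (h h1 h2 : H) :
    Φ h (h1 + h2) = Φ h h1 + Φ h h2 + d h (Γ h1 h2)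
      - Γ (cH.dot h h1) (cH.dot h h2) := by
  refine sub_eq_zero.mp ?_
  calc Φ h (h1 + h2) - (Φ h h1 + Φ h h2 + d h (Γ h1 h2) - Γ (cH.dot h h1) (cH.dot h h2))
      = Γ (cH.dot h h1) (cH.dot h h2) - d h (Γ h1 h2) - Φ h h2 + Φ h (h1 + h2) - Φ h h1 := by
        abel
    _ = 0 := S.e2 h h1 h2

theorem e3' (S : Scal cH d Γ Φ) (h h' k : H) :
    Φ (h + h') k = Φ (cH.dot h h') (cH.dot h k) + d (cH.dot h h') (Φ h k) := by
  refine sub_eq_zero.mp ?_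
  calc Φ (h + h') k - (Φ (cH.dot h h') (cH.dot h k) + d (cH.dot h h') (Φ h k))
      = -(Φ (cH.dot h h') (cH.dot h k) - Φ (h + h') k + d (cH.dot h h') (Φ h k)) := by abel
    _ = 0 := by rw [S.e3 h h' k, neg_zero]

variable (cI : LCS I)

def mkExt (S : Scal cH d Γ Φ) (hItriv : ∀ x y : I, cI.dot x y = y)
    (hmul : ∀ h h', cH.dot h (mul h h' - h) = h')
    (hd1 : ∀ h y y', d h (y + y') = d h y + d h y')
    (hd2 : ∀ y, d 0 y = y)
    (hd3 : ∀ (h h' : H) (y : I), d (mul h' h) y = d h (d h' y))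
    (hd4 : ∀ h : H, Function.Bijective (d h)) :
    LCSExtension H I cH cI :=
  letI grp : AddCommGroup (Tw I H) := twGroup cH d Γ Φ S
  { B := Tw I H
    grp := grp
    cB :=
      { dot := twDot cH d Φ
        bij := by
          intro x
          constructor
          · intro u v huv
            have hh : u.h = v.h := (cH.bij x.h).1 (congrArg Tw.h huv)
            have hy2 := congrArg Tw.y huv
            simp only [twDot] at hy2
            rw [hh] at hy2
            have hy : u.y = v.y := (hd4 x.h).1 (sub_left_inj.mp hy2)
            show u = v
            calc u = ⟨u.y, u.h⟩ := rfl
              _ = ⟨v.y, v.h⟩ := by rw [hy, hh]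
              _ = v := rfl
          · intro z
            obtain ⟨h', hh'⟩ := (cH.bij x.h).2 z.h
            obtain ⟨y', hy'⟩ := (hd4 x.h).2 (z.y + Φ x.h h')
            refine ⟨⟨y', h'⟩, ?_⟩
            show (⟨d x.h y' - Φ x.h h', cH.dot x.h h'⟩ : Tw I H) = z
            rw [hy', hh', add_sub_cancel_right]
        dot_add := by
          intro x u v
          show twDot cH d Φ x (twAdd Γ u v) = twAdd Γ (twDot cH d Φ x u) (twDot cH d Φ x v)
          unfold twDot twAdd
          simp only [Tw.mk.injEq]
          refine ⟨?_, cH.dot_add x.h u.h v.h⟩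
          rw [hd1, hd1, e2' cH d Γ Φ S x.h u.h v.h]
          abel
        add_dot := by
          intro u v z
          show twDot cH d Φ (twAdd Γ u v) z
            = twDot cH d Φ (twDot cH d Φ u v) (twDot cH d Φ u z)
          unfold twDot twAdd
          simp only [Tw.mk.injEq]
          refine ⟨?_, cH.add_dot u.h v.h z.h⟩
          rw [d_add_eq cH d mul hmul hd3, e3' cH d Γ Φ S u.h v.h z.h,
            d_sub d hd1]
          abel }
    ι := AddMonoidHom.mk' (fun y => ⟨y, 0⟩) (by
      intro a b
      show (⟨a + b, 0⟩ : Tw I H) = twAdd Γ ⟨a, 0⟩ ⟨b, 0⟩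
      unfold twAdd
      simp only [Tw.mk.injEq]
      rw [S.normR, add_zero, add_zero]
      exact ⟨rfl, rfl⟩)
    π := AddMonoidHom.mk' Tw.h (fun a b => rfl)
    ι_dot := by
      intro x y
      show (⟨cI.dot x y, 0⟩ : Tw I H) = twDot cH d Φ ⟨x, 0⟩ ⟨y, 0⟩
      unfold twDot
      simp only
      rw [hItriv, hd2, S.fnormL, lcs_dot_zero, sub_zero]
    π_dot := fun a b => rfl
    inj := fun a b hab => congrArg Tw.y hab
    surj := fun h => ⟨⟨0, h⟩, rfl⟩
    exact := by
      intro b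
      constructor
      · intro hb
        obtain ⟨yy, hh⟩ := b
        refine ⟨yy, ?_⟩
        show (⟨yy, 0⟩ : Tw I H) = ⟨yy, hh⟩
        rw [show hh = 0 from hb]
      · rintro ⟨y, rfl⟩
        rfl }

theorem mkExt_dia (S : Scal cH d Γ Φ) (hItriv : ∀ x y : I, cI.dot x y = y)
    (hmul : ∀ h h', cH.dot h (mul h h' - h) = h')
    (hd1 : ∀ h y y', d h (y + y') = d h y + d h y')
    (hd2 : ∀ y, d 0 y = y)
    (hd3 : ∀ (h h' : H) (y : I), d (mul h' h) y = d h (d h' y))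
    (hd4 : ∀ h : H, Function.Bijective (d h)) :
    IsDiamondExt d (mkExt cH d mul Γ Φ cI S hItriv hmul hd1 hd2 hd3 hd4) := by
  intro t ht ht0 h y
  constructor
  · show twDot cH d Φ (t h) ⟨y, 0⟩ = ⟨d h y, 0⟩
    have hth : (t h).h = h := ht h
    unfold twDot
    rw [hth, S.fnormR, lcs_dot_zero, sub_zero]
  · show twDot cH d Φ ⟨y, 0⟩ (t h) = t h
    unfold twDot
    simp only
    rw [hd2, S.fnormL, lcs_zero_dot cH, sub_zero]
    rfl

end MkExt
end St16

namespace St16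
variable {H I : Type u} [AddCommGroup H] [AddCommGroup I]
variable {cH : LCS H} {cI : LCS I} (d : H → I → I)

section Extract
variable (E : LCSExtension H I cH cI)

/-- A set-theoretic section of `π` with `s 0 = 0`. -/
noncomputable def sec : H → E.B := fun h =>
  if h = 0 then 0 else Classical.choose (E.surj h)

theorem sec_spec (h : H) : E.π (sec E h) = h := by
  unfold sec
  split
  · next hh => rw [hh, map_zero]
  · exact Classical.choose_spec (E.surj h)

theorem sec_zero : sec E 0 = 0 := if_pos rfl

/-- Partial inverse of `ι`. -/
noncomputable def invi : E.B → I := fun b =>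
  if hb : E.π b = 0 then Classical.choose ((E.exact b).1 hb) else 0

theorem invi_spec {b : E.B} (hb : E.π b = 0) : E.ι (invi E b) = b := by
  unfold invi
  rw [dif_pos hb]
  exact Classical.choose_spec ((E.exact b).1 hb)

theorem invi_iota (y : I) : invi E (E.ι y) = y := by
  apply E.inj
  exact invi_spec E ((E.exact (E.ι y)).2 ⟨y, rfl⟩)

theorem dot_iota_left (hItriv : ∀ x y : I, cI.dot x y = y)
    (hDia : IsDiamondExt d E) (y : I) (b : E.B) : E.cB.dot (E.ι y) b = b := by
  have hb : b = E.ι (invi E (b - sec E (E.π b))) + sec E (E.π b) := by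
    rw [invi_spec E (by rw [map_sub, sec_spec, sub_self])]
    abel
  rw [hb, E.cB.dot_add, (hDia (sec E) (sec_spec E) (sec_zero E) _ _).2,
    ← E.ι_dot, hItriv]

theorem dot_shift (hItriv : ∀ x y : I, cI.dot x y = y)
    (hDia : IsDiamondExt d E) (y : I) (b c : E.B) :
    E.cB.dot (E.ι y + b) c = E.cB.dot b c := by
  rw [E.cB.add_dot, dot_iota_left d E hItriv hDia, dot_iota_left d E hItriv hDia]

/-- Scalar cocycles extracted from an extension. -/
noncomputable def gam : H → H → I := fun h k =>
  invi E (sec E h + sec E k - sec E (h + k))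

noncomputable def phi : H → H → I := fun h k =>
  invi E (sec E (cH.dot h k) - E.cB.dot (sec E h) (sec E k))

theorem iota_gam (h k : H) :
    E.ι (gam E h k) = sec E h + sec E k - sec E (h + k) :=
  invi_spec E (by rw [map_sub, map_add, sec_spec, sec_spec, sec_spec, sub_self])

theorem iota_phi (h k : H) :
    E.ι (phi E h k) = sec E (cH.dot h k) - E.cB.dot (sec E h) (sec E k) :=
  invi_spec E (by
    rw [map_sub, E.π_dot, sec_spec, sec_spec, sec_spec, sub_self])

theorem dot_sec_sec (h k : H) :
    E.cB.dot (sec E h) (sec E k) = sec E (cH.dot h k) - E.ι (phi E h k) := by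
  rw [iota_phi]
  abel

theorem sum_sec (h k : H) :
    sec E h + sec E k = E.ι (gam E h k) + sec E (h + k) := by
  rw [iota_gam]
  abel

theorem dot_sec_sum (hItriv : ∀ x y : I, cI.dot x y = y)
    (hDia : IsDiamondExt d E) (h h' : H) (c : E.B) :
    E.cB.dot (sec E (h + h')) c = E.cB.dot (sec E (cH.dot h h')) (E.cB.dot (sec E h) c) := by
  have h1 : E.cB.dot (sec E h + sec E h') c = E.cB.dot (sec E (h + h')) c := by
    rw [sum_sec, dot_shift d E hItriv hDia]
  have h2 : E.cB.dot (E.cB.dot (sec E h) (sec E h')) (E.cB.dot (sec E h) c)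
      = E.cB.dot (sec E (cH.dot h h')) (E.cB.dot (sec E h) c) := by
    have h3 : E.cB.dot (sec E h) (sec E h')
        = E.ι (-phi E h h') + sec E (cH.dot h h') := by
      rw [map_neg, dot_sec_sec]
      abel
    rw [h3, dot_shift d E hItriv hDia]
  rw [← h1, E.cB.add_dot, h2]

theorem scal_extract (hItriv : ∀ x y : I, cI.dot x y = y)
    (hDia : IsDiamondExt d E) : Scal cH d (gam E) (phi E) := by
  have hsec := sec_spec E
  have hz := sec_zero E
  have hdot := fun h y => (hDia (sec E) hsec hz h y).1
  constructor
  · intro h k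
    unfold gam
    rw [add_comm (sec E h), add_comm h k]
  · intro h
    unfold gam
    rw [hz, add_zero, add_zero, sub_self]
    exact (map_zero E.ι) ▸ invi_iota E 0
  · intro h
    unfold gam
    rw [hz, zero_add, zero_add, sub_self]
    exact (map_zero E.ι) ▸ invi_iota E 0
  · intro x y z
    apply E.inj
    rw [map_zero, map_sub, map_add, map_sub, iota_gam, iota_gam, iota_gam, iota_gam,
      add_assoc x y z]
    abel
  · intro h
    unfold phi
    rw [lcs_dot_zero, hz, lcs_dot_zero, zero_sub]
    rw [show -(0 : E.B) = E.ι (-0) by rw [map_neg, map_zero], invi_iota, neg_zero]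
  · intro h
    unfold phi
    rw [lcs_zero_dot cH, hz, lcs_zero_dot E.cB, sub_self]
    exact (map_zero E.ι) ▸ invi_iota E 0
  · intro h h1 h2
    apply E.inj
    rw [map_zero, map_sub, map_add, map_sub, map_sub]
    rw [show E.ι (d h (gam E h1 h2)) = E.cB.dot (sec E h) (E.ι (gam E h1 h2)) from
      (hdot h _).symm]
    rw [iota_gam, iota_gam, lcs_dot_sub E.cB, E.cB.dot_add, dot_sec_sec, dot_sec_sec,
      dot_sec_sec, iota_phi, iota_phi, iota_phi, ← cH.dot_add]
    abel
  · intro h h' k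
    apply E.inj
    rw [map_zero, map_add, map_sub]
    rw [show E.ι (d (cH.dot h h') (phi E h k)) =
      E.cB.dot (sec E (cH.dot h h')) (E.ι (phi E h k)) from (hdot _ _).symm]
    rw [iota_phi, iota_phi, iota_phi, lcs_dot_sub E.cB, dot_sec_sec,
      ← dot_sec_sum d E hItriv hDia, ← cH.add_dot]
    abel

end Extract
end St16

namespace St16
variable {H I : Type u} [AddCommGroup H] [AddCommGroup I]
variable {cH : LCS H} {cI : LCS I} (d : H → I → I) (mul : H → H → H)

section RoundTrip

variable (Γ Φ : H → H → I) (S : Scal cH d Γ Φ)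
variable (hItriv : ∀ x y : I, cI.dot x y = y)
variable (hmul : ∀ h h', cH.dot h (mul h h' - h) = h')
variable (hd1 : ∀ h y y', d h (y + y') = d h y + d h y')
variable (hd2 : ∀ y, d 0 y = y)
variable (hd3 : ∀ (h h' : H) (y : I), d (mul h' h) y = d h (d h' y))
variable (hd4 : ∀ h : H, Function.Bijective (d h))

theorem sec_eta (E : LCSExtension H I cH cI) (hB : E.B = Tw I H)
    (m : H) : True := trivial

/-- `gam` of the built extension, in terms of `Γ` and the section defect. -/
theorem gam_mkExt (h k : H) :
    gam (mkExt cH d mul Γ Φ cI S hItriv hmul hd1 hd2 hd3 hd4) h k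
      = Γ h k + (sec (mkExt cH d mul Γ Φ cI S hItriv hmul hd1 hd2 hd3 hd4) h).y
        + (sec (mkExt cH d mul Γ Φ cI S hItriv hmul hd1 hd2 hd3 hd4) k).y
        - (sec (mkExt cH d mul Γ Φ cI S hItriv hmul hd1 hd2 hd3 hd4) (h + k)).y := by
  set E := mkExt cH d mul Γ Φ cI S hItriv hmul hd1 hd2 hd3 hd4 with hE
  have hsh : ∀ m, sec E m = (⟨(sec E m).y, m⟩ : Tw I H) := by
    intro m
    have hm : (sec E m).h = m := sec_spec E m
    calc sec E m = ⟨(sec E m).y, (sec E m).h⟩ := rfl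
      _ = _ := by rw [hm]
  apply E.inj
  rw [iota_gam, eq_comm, eq_sub_iff_add_eq]
  show twAdd Γ ⟨Γ h k + (sec E h).y + (sec E k).y - (sec E (h + k)).y, 0⟩ (sec E (h + k))
      = twAdd Γ (sec E h) (sec E k)
  rw [hsh (h + k), hsh h, hsh k]
  unfold twAdd
  simp only [Tw.mk.injEq]
  constructor
  · rw [S.normL]
    abel
  · rw [zero_add]

theorem phi_mkExt (h k : H) :
    phi (mkExt cH d mul Γ Φ cI S hItriv hmul hd1 hd2 hd3 hd4) h k
      = Φ h k + (sec (mkExt cH d mul Γ Φ cI S hItriv hmul hd1 hd2 hd3 hd4) (cH.dot h k)).y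
        - d h ((sec (mkExt cH d mul Γ Φ cI S hItriv hmul hd1 hd2 hd3 hd4) k).y) := by
  set E := mkExt cH d mul Γ Φ cI S hItriv hmul hd1 hd2 hd3 hd4 with hE
  have hsh : ∀ m, sec E m = (⟨(sec E m).y, m⟩ : Tw I H) := by
    intro m
    have hm : (sec E m).h = m := sec_spec E m
    calc sec E m = ⟨(sec E m).y, (sec E m).h⟩ := rfl
      _ = _ := by rw [hm]
  apply E.inj
  rw [iota_phi, eq_comm, eq_sub_iff_add_eq]
  show twAdd Γ ⟨Φ h k + (sec E (cH.dot h k)).y - d h ((sec E k).y), 0⟩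
      (twDot cH d Φ (sec E h) (sec E k)) = sec E (cH.dot h k)
  rw [hsh (cH.dot h k), hsh h, hsh k]
  unfold twAdd twDot
  simp only [Tw.mk.injEq]
  constructor
  · rw [S.normL]
    abel
  · rw [zero_add]

/-- The built extension of the extracted cocycle is equivalent to `E`. -/
theorem mkExt_extract_equiv (E : LCSExtension H I cH cI)
    (hDia : IsDiamondExt d E) :
    ExtEquiv (mkExt cH d mul (gam E) (phi E) cI
      (scal_extract d E hItriv hDia) hItriv hmul hd1 hd2 hd3 hd4) E := by
  refine ⟨AddMonoidHom.mk' (fun x : Tw I H => E.ι x.y + sec E x.h) ?_, ?_, ?_, ?_⟩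
  · intro x x'
    show E.ι (x.y + x'.y + gam E x.h x'.h) + sec E (x.h + x'.h)
      = E.ι x.y + sec E x.h + (E.ι x'.y + sec E x'.h)
    rw [← sub_eq_zero]
    have hrw : E.ι (x.y + x'.y + gam E x.h x'.h) + sec E (x.h + x'.h)
        - (E.ι x.y + sec E x.h + (E.ι x'.y + sec E x'.h))
        = (E.ι (gam E x.h x'.h) + sec E (x.h + x'.h)) - (sec E x.h + sec E x'.h) := by
      rw [map_add, map_add]
      abel
    rw [hrw, ← sum_sec E x.h x'.h, sub_self]
  · intro a b
    show E.ι (d a.h b.y - phi E a.h b.h) + sec E (cH.dot a.h b.h)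
      = E.cB.dot (E.ι a.y + sec E a.h) (E.ι b.y + sec E b.h)
    rw [dot_shift d E hItriv hDia, E.cB.dot_add,
      (hDia (sec E) (sec_spec E) (sec_zero E) a.h b.y).1, dot_sec_sec, map_sub]
    abel
  · intro b
    show E.π (E.ι b.y + sec E b.h) = b.h
    rw [map_add, sec_spec, (E.exact (E.ι b.y)).2 ⟨b.y, rfl⟩, zero_add]
  · intro y
    show E.ι y + sec E 0 = E.ι y
    rw [sec_zero, add_zero]

end RoundTrip
end St16

namespace St16
variable {H I : Type u} [AddCommGroup H] [AddCommGroup I]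
variable {cH : LCS H} {cI : LCS I} (d : H → I → I) (mul : H → H → H)

section Cob
variable (Γp Φp Γq Φq : H → H → I) (Sp : Scal cH d Γp Φp) (Sq : Scal cH d Γq Φq)
variable (hItriv : ∀ x y : I, cI.dot x y = y)
variable (hmul : ∀ h h', cH.dot h (mul h h' - h) = h')
variable (hd1 : ∀ h y y', d h (y + y') = d h y + d h y')
variable (hd2 : ∀ y, d 0 y = y)
variable (hd3 : ∀ (h h' : H) (y : I), d (mul h' h) y = d h (d h' y))
variable (hd4 : ∀ h : H, Function.Bijective (d h))

theorem cob_equiv (Φ0 : H → I) (hΦ0 : Φ0 0 = 0)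
    (hG : ∀ h k, Γp h k = Γq h k + (Φ0 k - Φ0 (h + k) + Φ0 h))
    (hF : ∀ h k, Φp h k = Φq h k + (Φ0 (cH.dot h k) - d h (Φ0 k))) :
    ExtEquiv (mkExt cH d mul Γp Φp cI Sp hItriv hmul hd1 hd2 hd3 hd4)
      (mkExt cH d mul Γq Φq cI Sq hItriv hmul hd1 hd2 hd3 hd4) := by
  refine ⟨AddMonoidHom.mk' (fun x : Tw I H => (⟨x.y + Φ0 x.h, x.h⟩ : Tw I H)) ?_, ?_, ?_, ?_⟩
  · intro x x'
    show (⟨(x.y + x'.y + Γp x.h x'.h) + Φ0 (x.h + x'.h), x.h + x'.h⟩ : Tw I H)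
      = twAdd Γq ⟨x.y + Φ0 x.h, x.h⟩ ⟨x'.y + Φ0 x'.h, x'.h⟩
    unfold twAdd
    simp only [Tw.mk.injEq]
    refine ⟨?_, by trivial⟩
    rw [hG x.h x'.h]
    abel
  · intro x x'
    show (⟨(d x.h x'.y - Φp x.h x'.h) + Φ0 (cH.dot x.h x'.h), cH.dot x.h x'.h⟩ : Tw I H)
      = twDot cH d Φq ⟨x.y + Φ0 x.h, x.h⟩ ⟨x'.y + Φ0 x'.h, x'.h⟩
    unfold twDot
    simp only [Tw.mk.injEq]
    refine ⟨?_, by trivial⟩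
    rw [hF x.h x'.h, hd1]
    abel
  · intro b
    rfl
  · intro y
    show (⟨y + Φ0 0, (0 : H)⟩ : Tw I H) = ⟨y, 0⟩
    rw [hΦ0, add_zero]

end Cob

section Wd
variable (E1 E2 : LCSExtension H I cH cI)

theorem extract_wd (hItriv : ∀ x y : I, cI.dot x y = y)
    (hDia2 : IsDiamondExt d E2) (ψ : E1.B →+ E2.B)
    (hψdot : ∀ a b, ψ (E1.cB.dot a b) = E2.cB.dot (ψ a) (ψ b))
    (hψπ : ∀ b, E2.π (ψ b) = E1.π b) (hψι : ∀ y, ψ (E1.ι y) = E2.ι y) :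
    ∃ τ : H → I, τ 0 = 0 ∧
      (∀ h k, gam E2 h k = gam E1 h k + (τ k - τ (h + k) + τ h)) ∧
      (∀ h k, phi E2 h k = phi E1 h k + (τ (cH.dot h k) - d h (τ k))) := by
  set t : H → E2.B := fun h => ψ (sec E1 h) with ht
  have htspec : ∀ h, E2.π (t h) = h := fun h => by rw [ht]; rw [hψπ, sec_spec]
  have ht0 : t 0 = 0 := by rw [ht]; simp only; rw [sec_zero, map_zero]
  set τ : H → I := fun h => invi E2 (sec E2 h - t h) with hτ
  have iota_tau : ∀ h, E2.ι (τ h) = sec E2 h - t h := fun h =>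
    invi_spec E2 (by rw [map_sub, sec_spec, htspec, sub_self])
  have hGt : ∀ h k, E2.ι (gam E1 h k) = t h + t k - t (h + k) := by
    intro h k
    rw [← hψι, iota_gam, map_sub, map_add]
  have hFt : ∀ h k, E2.ι (phi E1 h k) = t (cH.dot h k) - E2.cB.dot (t h) (t k) := by
    intro h k
    rw [← hψι, iota_phi, map_sub, hψdot]
  have hs2 : ∀ h, sec E2 h = E2.ι (τ h) + t h := by
    intro h
    rw [iota_tau]
    abel
  refine ⟨τ, ?_, ?_, ?_⟩
  · rw [hτ]
    simp only
    rw [sec_zero, ht0, sub_zero]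
    exact (map_zero E2.ι) ▸ invi_iota E2 0
  · intro h k
    apply E2.inj
    rw [iota_gam, map_add, map_add, map_sub, hGt, iota_tau, iota_tau, iota_tau]
    abel
  · intro h k
    apply E2.inj
    have hd : E2.ι (d h (τ k)) = E2.cB.dot (t h) (E2.ι (τ k)) :=
      (hDia2 t htspec ht0 h (τ k)).1.symm
    rw [iota_phi, map_add, map_sub, hFt, hd, iota_tau (cH.dot h k), iota_tau k, lcs_dot_sub E2.cB]
    have hss : E2.cB.dot (sec E2 h) (sec E2 k) = E2.cB.dot (t h) (sec E2 k) := by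
      rw [hs2 h, dot_shift d E2 hItriv hDia2]
    rw [hss]
    abel

end Wd
end St16

namespace St16
variable {H I : Type u} [AddCommGroup H] [AddCommGroup I]
variable {cH : LCS H} {cI : LCS I} (d : H → I → I) (mul : H → H → H)

theorem cob_from_decomp (E : LCSExtension H I cH cI) (G : Coch H I 0 2)
    (F : Coch H I 1 1) (τ : H → I) (hτ0 : τ 0 = 0)
    (hg : ∀ h k, gam E h k = ΓOf G h k + τ h + τ k - τ (h + k))
    (hf : ∀ h k, phi E h k = ΦOf F h k + τ (cH.dot h k) - d h (τ k)) :
    ∃ φ : Coch H I 0 1, Normalized φ ∧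
      (cochOfScal (gam E) (phi E)).1 = G + dV φ ∧
      (cochOfScal (gam E) (phi E)).2 = F + dH cH d φ := by
  refine ⟨fun _ b => τ (b 0), ?_, ?_, ?_⟩
  · rintro a b (⟨i, hi⟩ | ⟨j, hj⟩)
    · exact absurd hi i.elim0
    · show τ (b 0) = 0
      rw [show b 0 = 0 from (Fin.eq_zero j) ▸ hj, hτ0]
  · funext a b
    simp only [Pi.add_apply]
    rw [dV01_eval]
    show gam E (b 0) (b 1) = G a b + (τ (b 1) - τ (b 0 + b 1) + τ (b 0))
    have h2 : ΓOf G (b 0) (b 1) = G a b := by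
      show G e0 ![b 0, b 1] = G a b
      rw [eta2 b, ← fin0_eq a]
    rw [hg, h2]
    abel
  · funext a b
    simp only [Pi.add_apply]
    rw [dH01_eval]
    show phi E (a 0) (b 0) = F a b + (τ (cH.dot (a 0) (b 0)) - d (a 0) (τ (b 0)))
    have h2 : ΦOf F (a 0) (b 0) = F a b := by
      show F ![a 0] ![b 0] = F a b
      rw [eta1 a, eta1 b]
    rw [hf, h2]
    abel

theorem extract_mkExt_cob (p : { p : Coch H I 0 2 × Coch H I 1 1 // Z2cond cH d p })
    (hItriv : ∀ x y : I, cI.dot x y = y)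
    (hmul : ∀ h h', cH.dot h (mul h h' - h) = h')
    (hd1 : ∀ h y y', d h (y + y') = d h y + d h y')
    (hd2 : ∀ y, d 0 y = y)
    (hd3 : ∀ (h h' : H) (y : I), d (mul h' h) y = d h (d h' y))
    (hd4 : ∀ h : H, Function.Bijective (d h)) :
    CobRel cH d
      ⟨cochOfScal
        (gam (mkExt cH d mul (ΓOf p.1.1) (ΦOf p.1.2) cI (scal_of_z2 cH d p.1 p.2)
          hItriv hmul hd1 hd2 hd3 hd4))
        (phi (mkExt cH d mul (ΓOf p.1.1) (ΦOf p.1.2) cI (scal_of_z2 cH d p.1 p.2)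
          hItriv hmul hd1 hd2 hd3 hd4)),
        z2_of_scal cH d _ _ (scal_extract d _ hItriv
          (mkExt_dia cH d mul (ΓOf p.1.1) (ΦOf p.1.2) cI (scal_of_z2 cH d p.1 p.2)
            hItriv hmul hd1 hd2 hd3 hd4))⟩ p := by
  obtain ⟨φ, h1, h2, h3⟩ := cob_from_decomp d
    (mkExt cH d mul (ΓOf p.1.1) (ΦOf p.1.2) cI (scal_of_z2 cH d p.1 p.2)
      hItriv hmul hd1 hd2 hd3 hd4) p.1.1 p.1.2
    (fun h => (sec (mkExt cH d mul (ΓOf p.1.1) (ΦOf p.1.2) cI (scal_of_z2 cH d p.1 p.2)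
      hItriv hmul hd1 hd2 hd3 hd4) h).y)
    (by
      show (sec (mkExt cH d mul (ΓOf p.1.1) (ΦOf p.1.2) cI (scal_of_z2 cH d p.1 p.2)
        hItriv hmul hd1 hd2 hd3 hd4) 0).y = 0
      rw [sec_zero]
      rfl)
    (fun h k => by
      have := gam_mkExt d mul (ΓOf p.1.1) (ΦOf p.1.2) (scal_of_z2 cH d p.1 p.2)
        hItriv hmul hd1 hd2 hd3 hd4 h k
      exact this)
    (fun h k => by
      have := phi_mkExt d mul (ΓOf p.1.1) (ΦOf p.1.2) (scal_of_z2 cH d p.1 p.2)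
        hItriv hmul hd1 hd2 hd3 hd4 h k
      exact this)
  exact ⟨φ, h1, h2, h3⟩

end St16

/-- There is a bijective correspondence `Ext_♦(H,I) ↔ H²_♦(H,I)`. -/
theorem statement16 {H I : Type u} [AddCommGroup H] [AddCommGroup I]
    (cH : LCS H) (cI : LCS I) (hItriv : ∀ x y : I, cI.dot x y = y)
    (d : H → I → I)
    (mul : H → H → H) (hmul : ∀ h h', cH.dot h (mul h h' - h) = h')
    (hd1 : ∀ h y y', d h (y + y') = d h y + d h y')
    (hd2 : ∀ y, d 0 y = y)
    (hd3 : ∀ (h h' : H) (y : I), d (mul h' h) y = d h (d h' y))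
    (hd4 : ∀ h : H, Function.Bijective (d h)) :
    Nonempty (ExtDiamond H I cH cI d ≃ H2Diamond H I cH d) := by
  classical
  let bE : {p : Coch H I 0 2 × Coch H I 1 1 // Z2cond cH d p} →
      {E : LCSExtension H I cH cI // IsDiamondExt d E} := fun p =>
    ⟨St16.mkExt cH d mul (St16.ΓOf p.1.1) (St16.ΦOf p.1.2) cI
        (St16.scal_of_z2 cH d p.1 p.2) hItriv hmul hd1 hd2 hd3 hd4,
      St16.mkExt_dia cH d mul (St16.ΓOf p.1.1) (St16.ΦOf p.1.2) cI
        (St16.scal_of_z2 cH d p.1 p.2) hItriv hmul hd1 hd2 hd3 hd4⟩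
  let eX : {E : LCSExtension H I cH cI // IsDiamondExt d E} →
      {p : Coch H I 0 2 × Coch H I 1 1 // Z2cond cH d p} := fun E =>
    ⟨St16.cochOfScal (St16.gam E.1) (St16.phi E.1),
      St16.z2_of_scal cH d _ _ (St16.scal_extract d E.1 hItriv E.2)⟩
  have cobSound : ∀ p q, CobRel cH d p q → ExtEquiv (bE p).1 (bE q).1 := by
    rintro p q ⟨φ, hφn, hφ1, hφ2⟩
    refine St16.cob_equiv d mul _ _ _ _ (St16.scal_of_z2 cH d p.1 p.2)
      (St16.scal_of_z2 cH d q.1 q.2) hItriv hmul hd1 hd2 hd3 hd4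
      (fun h => φ St16.e0 ![h]) (hφn St16.e0 ![0] (Or.inr ⟨0, rfl⟩)) ?_ ?_
    · intro h k
      have hh := congrFun (congrFun hφ1 St16.e0) ![h, k]
      simp only [Pi.add_apply] at hh
      rw [St16.dV01_eval] at hh
      exact hh
    · intro h k
      have hh := congrFun (congrFun hφ2 ![h]) ![k]
      simp only [Pi.add_apply] at hh
      rw [St16.dH01_eval] at hh
      exact hh
  have extSound : ∀ E1 E2 : {E : LCSExtension H I cH cI // IsDiamondExt d E},
      ExtEquiv E1.1 E2.1 → CobRel cH d (eX E2) (eX E1) := by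
    rintro E1 E2 ⟨ψ, hdot, hπ, hι⟩
    obtain ⟨τ, hτ0, hG, hF⟩ := St16.extract_wd d E1.1 E2.1 hItriv E2.2 ψ hdot hπ hι
    refine ⟨fun _ b => τ (b 0), ?_, ?_, ?_⟩
    · rintro a b (⟨i, hi⟩ | ⟨j, hj⟩)
      · exact absurd hi i.elim0
      · show τ (b 0) = 0
        rw [show b 0 = 0 from (Fin.eq_zero j) ▸ hj, hτ0]
    · funext a b
      simp only [Pi.add_apply]
      rw [St16.dV01_eval]
      exact hG (b 0) (b 1)
    · funext a b
      simp only [Pi.add_apply]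
      rw [St16.dH01_eval]
      exact hF (a 0) (b 0)
  exact ⟨{
    toFun := Quot.lift (fun E => Quot.mk _ (eX E))
      (fun E1 E2 hE => (Quot.sound (extSound E1 E2 hE)).symm)
    invFun := Quot.lift (fun p => Quot.mk _ (bE p))
      (fun p q hpq => Quot.sound (cobSound p q hpq))
    left_inv := Quot.ind fun E =>
      Quot.sound (St16.mkExt_extract_equiv d mul hItriv hmul hd1 hd2 hd3 hd4 E.1 E.2)
    right_inv := Quot.ind fun p =>
      Quot.sound (St16.extract_mkExt_cob d mul p hItriv hmul hd1 hd2 hd3 hd4) }⟩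
end

section
/- Let H be a linear cycle set, I a trivial linear cycle set, and ♦ : H×I → I, ≪ : I×H → I maps satisfying: h♦(y+y') = h♦y + h♦y', 0♦y = y, (h'h)♦y = h♦(h'♦y) (h'h the brace product on H), y≪(h+h') = y≪h + y≪h', (y+y')≪h = y≪h + y'≪h, y≪0 = 0, 0≪h = 0, (h♦y)≪(h·h') = h♦(y≪h') + (h♦(y≪h))≪(h·h'), and each map y ↦ h♦y bijective. Then ∂_v^{r,2} ∘ D_{r−k,k}^{r,1} = 0 for all r ≥ k ≥ 1. -/
open scoped Classical

/-- `∂ᵥ^{r,2} ∘ D_{r-k,k}^{r,1} = 0` for all `r ≥ k ≥ 1` (with `r = r₀ + s` and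
`k = s` where `f ∈ Ĉ_N^{r₀,s}(H,I)`). -/
theorem statement17 {H I : Type*} [AddCommGroup H] [AddCommGroup I]
    (cH : LCS H) (cI : LCS I) (hItriv : ∀ x y : I, cI.dot x y = y)
    (d : H → I → I) (yl : I → H → I)
    (mul : H → H → H) (hmul : ∀ h h', cH.dot h (mul h h' - h) = h')
    (hd1 : ∀ h y y', d h (y + y') = d h y + d h y')
    (hd2 : ∀ y, d 0 y = y)
    (hd3 : ∀ (h h' : H) (y : I), d (mul h' h) y = d h (d h' y))
    (hyl1 : ∀ (y : I) (h h' : H), yl y (h + h') = yl y h + yl y h')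
    (hyl2 : ∀ (y y' : I) (h : H), yl (y + y') h = yl y h + yl y' h)
    (hyl3 : ∀ y : I, yl y 0 = 0)
    (hyl4 : ∀ h : H, yl 0 h = 0)
    (hcomp : ∀ (h h' : H) (y : I),
      yl (d h y) (cH.dot h h') = d h (yl y h') + yl (d h (yl y h)) (cH.dot h h'))
    (hd4 : ∀ h : H, Function.Bijective (d h)) :
    ∀ (r s : ℕ), 1 ≤ s → ∀ f : Coch H I r s, Normalized f → ShuffleRel f →
      dV (Dmap cH d yl f) = 0 := by
  intro r s _hs f _hN _hS
  funext a b
  have h0 : mergeAt b 0 = fun _ : Fin 1 => b 0 + b 1 := by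
    funext i
    fin_cases i
    simp [mergeAt]
  simp only [dV, Dmap, Finset.sum_range_succ, Finset.sum_range_zero, zero_add, h0,
    Pi.zero_apply, smul_smul]
  have hb1 : b (Fin.succ 0) = b 1 := rfl
  have hb0 : b (Fin.castSucc 0) = b 0 := rfl
  rw [hb1, hb0]
  have e1 : ((-1 : ℤ) ^ (r + s)) * ((-1 : ℤ) ^ (r + s)) = 1 := by
    rw [← pow_add]; exact Even.neg_one_pow ⟨r + s, by ring⟩
  have e2 : ((-1 : ℤ) ^ (r + s + 1 + 0)) * ((-1 : ℤ) ^ (r + s)) = -1 := by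
    rw [← pow_add, show r + s + 1 + 0 + (r + s) = 2 * (r + s) + 1 by ring]
    simp [pow_succ, pow_mul]
  have e3 : ((-1 : ℤ) ^ (r + s + 1 + 1)) * ((-1 : ℤ) ^ (r + s)) = 1 := by
    rw [← pow_add, show r + s + 1 + 1 + (r + s) = 2 * (r + s + 1) by ring]
    simp [pow_mul]
  rw [e1, e2, e3, one_smul, one_smul, neg_one_smul, cH.dot_add, hyl1]
  abel
end
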